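/- arXiv:2210.03236 — 14 statements merged into one kernel-verified Lean document; each statement's English description precedes it below -/
import Mathlib

section
/- Let q = 2 and let n ∈ {2, 3, 4, 5}. Then the largest value of ω(G_U), as U ranges over all proper F_2-linear subspaces of F_{2^n}, equals n + 1; that is, ω(G_U) ≤ n + 1 for every proper F_2-subspace U of F_{2^n}, and there exists a proper F_2-subspace U of F_{2^n} with ω(G_U) = n + 1. -/
/-- The Paley-like graph on a field `F` associated to a subset `S ⊆ F`:
distinct vertices `a, b ∈ F` are adjacent if and only if `a * b ∈ S`.
For an `F_q`-subspace `U`, the graph `G_U` of the paper is `paleyGraph (U : Set F)`. -/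
def paleyGraph {F : Type*} [Field F] (S : Set F) : SimpleGraph F where
  Adj a b := a ≠ b ∧ a * b ∈ S
  symm := ⟨fun a b h => ⟨h.1.symm, mul_comm a b ▸ h.2⟩⟩
  loopless := ⟨fun a h => h.1 rfl⟩

/-!
Choose a nonzero functional `φ` vanishing on `U`; then `B(x, y) = φ(x y)` is a nondegenerate
symmetric form, and a clique avoiding `0` is a `B`-orthogonal set `C`. Split `C` into its
isotropic part `J` and its anisotropic part `D`. The span `W` of `J` is totally isotropic and
orthogonal to `span C`, and `D` is independent modulo `W`; so with `t = dim W`, nondegeneracy gives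
`|D| + 2t ≤ n`, while counting `W` over `F₂` gives `|J| < 2^t`. Hence `|C| ≤ n - 2t + 2^t - 1`,
which is at most `n` because `2t ≤ n ≤ 5` forces `t ≤ 2`.

Conversely, every element of a finite field of characteristic `2` is a square, so `B` is not
alternating, and a nondegenerate non-alternating form has an orthogonal basis of anisotropic
vectors. Together with `0` it is a clique of size `n + 1` in `G_U` for `U = ker φ`.
-/

open Module Submodule

namespace LinearMap.BilinForm

variable {K V : Type*} [Field K] [AddCommGroup V] [Module K V] {B : LinearMap.BilinForm K V}

lemma apply_eq_zero_of_mem_span {X Y : Set V} (h : ∀ x ∈ X, ∀ y ∈ Y, B x y = 0) {x y : V}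
    (hx : x ∈ span K X) (hy : y ∈ span K Y) : B x y = 0 := by
  have hX : ∀ y ∈ Y, span K X ≤ LinearMap.ker (B.flip y) := fun y hy =>
    span_le.2 fun x hx => h x hx y hy
  have hY : span K Y ≤ LinearMap.ker (B x) := span_le.2 fun y hy => hX y hy hx
  exact hY hy

lemma finrank_span_sup_eq_card_add {D : Finset V}
    (hD : (D : Set V).Pairwise fun a b => B a b = 0) (hDD : ∀ a ∈ D, B a a ≠ 0)
    {W : Submodule K V} [FiniteDimensional K W] (hW : ∀ a ∈ D, ∀ w ∈ W, B a w = 0) :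
    finrank K ↥(span K (D : Set V) ⊔ W) = D.card + finrank K W := by
  have hli : LinearIndepOn K _root_.id (D : Set V) :=
    linearIndependent_of_iIsOrtho (B := B) (v := fun i : (D : Set V) => (i : V))
      (fun i j hij => hD i.2 j.2 (Subtype.coe_injective.ne hij)) (fun i => hDD i i.2)
  have hdisj : span K (D : Set V) ⊓ W = ⊥ := by
    refine (Submodule.eq_bot_iff _).2 fun x hx => ?_
    obtain ⟨hxD, hxW⟩ := mem_inf.1 hx
    obtain ⟨f, -, rfl⟩ := mem_span_finset.1 hxD
    refine Finset.sum_eq_zero fun a ha => ?_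
    suffices f a = 0 by rw [this, zero_smul]
    have h0 := hW a ha _ hxW
    rw [map_sum, Finset.sum_eq_single_of_mem a ha fun b hb hba => ?_] at h0
    · simpa [hDD a ha] using h0
    · simp [show B a b = 0 from hD ha hb hba.symm]
  have := Submodule.finrank_sup_add_finrank_inf_eq (span K (D : Set V)) W
  rwa [hdisj, finrank_bot, add_zero, finrank_span_finset_eq_card hli] at this

theorem exists_card_add_two_mul_le_of_pairwise_orthogonal [Fintype K] (hK : Fintype.card K = 2)
    [FiniteDimensional K V] (hB : B.Nondegenerate) {s : Finset V} (hs0 : (0 : V) ∉ s)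
    (hs : (s : Set V).Pairwise fun a b => B a b = 0) :
    ∃ t, 2 * t ≤ finrank K V ∧ s.card + 2 * t + 1 ≤ finrank K V + 2 ^ t := by
  classical
  set J := s.filter fun a => B a a = 0
  set D := s.filter fun a => ¬B a a = 0
  set V₀ := span K (J : Set V)
  set S := span K (D : Set V) ⊔ V₀
  have hsJ : ∀ a ∈ (s : Set V), ∀ j ∈ (J : Set V), B a j = 0 := by
    intro a ha j hj
    obtain ⟨hjs, hjj⟩ := Finset.mem_filter.1 hj
    rcases eq_or_ne a j with rfl | hne
    exacts [hjj, hs ha hjs hne]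
  have hS : finrank K S = D.card + finrank K V₀ :=
    finrank_span_sup_eq_card_add (hs.mono (Finset.filter_subset _ _))
      (fun a ha => (Finset.mem_filter.1 ha).2) fun a ha w hw =>
        apply_eq_zero_of_mem_span hsJ (subset_span (Finset.filter_subset _ _ ha)) hw
  have hSs : S ≤ span K (s : Set V) :=
    sup_le (span_mono (Finset.filter_subset _ _)) (span_mono (Finset.filter_subset _ _))
  have hV₀ : V₀ ≤ B.orthogonal S := fun w hw =>
    mem_orthogonal_iff.2 fun x hx => apply_eq_zero_of_mem_span hsJ (hSs hx) hw
  have hJ : J.card + 1 ≤ 2 ^ finrank K V₀ := by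
    have : Finite V := Module.finite_of_finite K
    have : Fintype V₀ := Fintype.ofFinite V₀
    have hsub : ((insert 0 J : Finset V) : Set V) ⊆ V₀ := by
      rw [Finset.coe_insert]
      exact Set.insert_subset (zero_mem _) subset_span
    have := Set.ncard_le_ncard hsub (Set.toFinite _)
    rwa [Set.ncard_coe_finset, ← Nat.card_coe_set_eq, SetLike.coe_sort_coe,
      Module.natCard_eq_pow_finrank (K := K), Nat.card_eq_fintype_card, hK,
      Finset.card_insert_of_notMem fun h => hs0 (Finset.filter_subset _ _ h)] at this
  have h1 := Submodule.finrank_mono hV₀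
  have h2 := Submodule.finrank_le S
  have h3 : J.card + D.card = s.card := Finset.card_filter_add_card_filter_not _
  rw [finrank_orthogonal hB] at h1
  exact ⟨finrank K V₀, by omega, by omega⟩

lemma exists_anisotropic_orthogonal_pair [FiniteDimensional K V] (hB : B.Nondegenerate)
    (hB₀ : B.IsRefl) (hQ : ∃ x, B x x ≠ 0) (h2 : 2 ≤ finrank K V) :
    ∃ x y, B x x ≠ 0 ∧ B x y = 0 ∧ B y y ≠ 0 := by
  obtain ⟨x, hx⟩ := hQ
  set W := B.orthogonal (K ∙ x)
  have hxW : ∀ w ∈ W, B x w = 0 := fun w hw => hw x (mem_span_singleton_self x)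
  by_cases hW : ∀ y ∈ W, B y y = 0
  swap
  · obtain ⟨y, hyW, hy⟩ := not_forall₂.1 hW
    exact ⟨x, y, hx, hxW y hyW, hy⟩
  have hW_ne : W ≠ ⊥ := by
    rw [← Submodule.one_le_finrank_iff, finrank_orthogonal hB,
      finrank_span_singleton (ne_zero_of_not_isOrtho_self x hx)]
    omega
  obtain ⟨u, huW, hu⟩ := W.ne_bot_iff.1 hW_ne
  obtain ⟨v, hvW, huv⟩ : ∃ v ∈ W, B u v ≠ 0 := by
    by_contra! h
    exact hu (congrArg Subtype.val
      ((restrict_nondegenerate_orthogonal_spanSingleton B hB hB₀ hx).1 ⟨u, huW⟩ fun v => h v v.2))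
  -- `u, v` are isotropic and orthogonal to `x`, so `x + u` and `x + c • v` stay anisotropic,
  -- and `c` is chosen to make them orthogonal.
  have hxu := hxW u huW
  have hxv := hxW v hvW
  refine ⟨x + u, x + (-B x x / B u v) • v, ?_, ?_, ?_⟩
  · simp [hxu, hB₀ _ _ hxu, hW u huW, hx]
  · simp [hxv, hB₀ _ _ hxu, huv]
  · simp [hxv, hB₀ _ _ hxv, hW v hvW, hx]

theorem exists_finset_card_eq_finrank_pairwise_orthogonal [FiniteDimensional K V]
    (hB : B.Nondegenerate) (hB₀ : B.IsRefl) (hQ : ∃ x, B x x ≠ 0) :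
    ∃ s : Finset V, s.card = finrank K V ∧ (s : Set V).Pairwise (fun a b => B a b = 0) ∧
      ∀ a ∈ s, B a a ≠ 0 := by
  suffices ∀ d, finrank K V = d → ∃ s : Finset V, s.card = d ∧
      (s : Set V).Pairwise (fun a b => B a b = 0) ∧ ∀ a ∈ s, B a a ≠ 0 from this _ rfl
  intro d hd
  induction d generalizing V with
  | zero => exact ⟨∅, by simp⟩
  | succ d ih =>
  classical
  obtain rfl | hd0 := Nat.eq_zero_or_pos d
  · obtain ⟨x, hx⟩ := hQ
    exact ⟨{x}, by simp, by simp, by simpa⟩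
  obtain ⟨x, y, hx, hxy, hy⟩ := exists_anisotropic_orthogonal_pair hB hB₀ hQ (by omega)
  set W := B.orthogonal (K ∙ x)
  have hxW : ∀ w ∈ W, B x w = 0 := fun w hw => hw x (mem_span_singleton_self x)
  have hyW : y ∈ W := fun z hz => by
    obtain ⟨c, rfl⟩ := mem_span_singleton.1 hz
    simp [hxy]
  obtain ⟨s, hcard, hpair, hs⟩ := ih (B := B.restrict W)
    (restrict_nondegenerate_orthogonal_spanSingleton B hB hB₀ hx) (fun a b h => hB₀ a b h)
    ⟨⟨y, hyW⟩, hy⟩ (by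
      rw [finrank_orthogonal hB, finrank_span_singleton (ne_zero_of_not_isOrtho_self x hx)]
      omega)
  have hx_notMem : x ∉ s.map (Function.Embedding.subtype _) := by
    rw [Finset.mem_map]
    rintro ⟨w, -, hw⟩
    exact hx (hxW x (hw ▸ w.2))
  refine ⟨insert x (s.map (Function.Embedding.subtype _)), ?_, ?_, ?_⟩
  · rw [Finset.card_insert_of_notMem hx_notMem, Finset.card_map, hcard]
  · rw [Finset.coe_insert, Finset.coe_map]
    refine Set.Pairwise.insert ?_ ?_
    · exact (Subtype.val_injective.injOn).pairwise_image.2 hpair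
    · rintro _ ⟨w, -, rfl⟩ -
      exact ⟨hxW w w.2, hB₀ _ _ (hxW w w.2)⟩
  · simpa [hx] using fun w hw hws => hs ⟨w, hw⟩ hws

end LinearMap.BilinForm

section MulForm

variable {K F : Type*} [Field K] [Field F] [Algebra K F]

def mulForm (φ : Module.Dual K F) : LinearMap.BilinForm K F := (LinearMap.mul K F).compr₂ φ

@[simp]
lemma mulForm_apply (φ : Module.Dual K F) (x y : F) : mulForm φ x y = φ (x * y) := rfl

lemma mulForm_isRefl (φ : Module.Dual K F) : (mulForm φ).IsRefl := fun x y h => by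
  rwa [mulForm_apply, mul_comm] at h

lemma mulForm_nondegenerate {φ : Module.Dual K F} (hφ : φ ≠ 0) : (mulForm φ).Nondegenerate := by
  obtain ⟨z, hz⟩ := DFunLike.ne_iff.1 hφ
  refine (mulForm_isRefl φ).nondegenerate_iff_separatingLeft.2 fun x hx => ?_
  by_contra h0
  exact hz (by simpa [mul_inv_cancel_left₀ h0] using hx (x⁻¹ * z))

lemma exists_mulForm_self_ne_zero [Finite F] [CharP F 2] {φ : Module.Dual K F} (hφ : φ ≠ 0) :
    ∃ x, mulForm φ x x ≠ 0 := by
  obtain ⟨z, hz⟩ := DFunLike.ne_iff.1 hφ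
  obtain ⟨x, rfl⟩ := isSquare_of_charTwo' z
  exact ⟨x, hz⟩

end MulForm

section PaleyGraph

variable {K F : Type*} [Field K] [Field F] [Algebra K F]

theorem exists_card_add_two_mul_le_of_isClique_paleyGraph [Fintype K] (hK : Fintype.card K = 2)
    [FiniteDimensional K F] {U : Submodule K F} (hU : U ≠ ⊤) {s : Finset F}
    (hs : (paleyGraph (U : Set F)).IsClique s) :
    ∃ t, 2 * t ≤ finrank K F ∧ s.card + 2 * t ≤ finrank K F + 2 ^ t := by
  classical
  obtain ⟨φ, hφ, hUφ⟩ := U.exists_le_ker_of_lt_top hU.lt_top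
  have hpair : ((s.erase 0 : Finset F) : Set F).Pairwise fun a b => mulForm φ a b = 0 :=
    fun a ha b hb hab => hUφ (hs (Finset.mem_of_mem_erase ha) (Finset.mem_of_mem_erase hb) hab).2
  obtain ⟨t, ht, hcard⟩ := LinearMap.BilinForm.exists_card_add_two_mul_le_of_pairwise_orthogonal
    hK (mulForm_nondegenerate hφ) (Finset.notMem_erase 0 s) hpair
  exact ⟨t, ht, by have := Finset.pred_card_le_card_erase (a := 0) (s := s); omega⟩

theorem cliqueNum_paleyGraph_le [Fintype K] (hK : Fintype.card K = 2) [FiniteDimensional K F]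
    (hF : finrank K F ≤ 5) {U : Submodule K F} (hU : U ≠ ⊤) :
    (paleyGraph (U : Set F)).cliqueNum ≤ finrank K F + 1 := by
  obtain ⟨s, hs⟩ := (paleyGraph (U : Set F)).exists_isNClique_cliqueNum
  obtain ⟨t, ht, hcard⟩ := exists_card_add_two_mul_le_of_isClique_paleyGraph hK hU hs.isClique
  -- `2 ^ t ≤ 2 * t + 1` fails from `t = 3` on, which would need `finrank K F ≥ 6`.
  have hpow : 2 ^ t ≤ 2 * t + 1 := by
    have : t ≤ 2 := by omega
    interval_cases t <;> norm_num
  rw [← hs.card_eq]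
  omega

theorem le_cliqueNum_paleyGraph_ker [Finite F] [CharP F 2] {φ : Module.Dual K F} (hφ : φ ≠ 0) :
    finrank K F + 1 ≤ (paleyGraph (LinearMap.ker φ : Set F)).cliqueNum := by
  classical
  have : FiniteDimensional K F := Module.Finite.of_finite
  obtain ⟨s, hcard, hpair, hs⟩ :=
    LinearMap.BilinForm.exists_finset_card_eq_finrank_pairwise_orthogonal
      (mulForm_nondegenerate hφ) (mulForm_isRefl φ) (exists_mulForm_self_ne_zero hφ)
  have h0 : (0 : F) ∉ s := fun h => hs 0 h (by simp)
  have hclique : (paleyGraph (LinearMap.ker φ : Set F)).IsClique (insert 0 s : Finset F) := by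
    rw [Finset.coe_insert]
    refine Set.Pairwise.insert (fun a ha b hb hab => ⟨hab, hpair ha hb hab⟩) fun b hb h0b => ?_
    exact ⟨⟨h0b, by simp⟩, ⟨h0b.symm, by simp⟩⟩
  calc finrank K F + 1 = (insert 0 s).card := by rw [Finset.card_insert_of_notMem h0, hcard]
    _ ≤ _ := hclique.card_le_cliqueNum

end PaleyGraph

/-- for `q = 2` and `n ∈ {2, 3, 4, 5}`, the largest value of `ω(G_U)` over
all proper `F_2`-subspaces `U` of `F_{2^n}` equals `n + 1`. -/
theorem omega_max_q_two_small_n (n : ℕ) (hn : n ∈ ({2, 3, 4, 5} : Set ℕ))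
    (K F : Type*) [Field K] [Field F] [Algebra K F] [Fintype K] [Fintype F]
    (hK : Fintype.card K = 2) (hF : Fintype.card F = 2 ^ n) :
    (∀ U : Submodule K F, U ≠ ⊤ → (paleyGraph (U : Set F)).cliqueNum ≤ n + 1) ∧
    (∃ U : Submodule K F, U ≠ ⊤ ∧ (paleyGraph (U : Set F)).cliqueNum = n + 1) := by
  have : FiniteDimensional K F := Module.Finite.of_finite
  have : CharP K 2 := charP_of_card_eq_prime hK
  have : CharP F 2 := charP_of_injective_algebraMap (algebraMap K F).injective 2
  have hrank : finrank K F = n := by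
    have := Module.card_eq_pow_finrank (K := K) (V := F)
    rw [hK, hF] at this
    exact (Nat.pow_right_injective le_rfl this).symm
  have hn5 : finrank K F ≤ 5 := by
    simp only [Set.mem_insert_iff, Set.mem_singleton_iff] at hn
    omega
  obtain ⟨φ, hφ, -⟩ := (⊥ : Submodule K F).exists_le_ker_of_lt_top bot_lt_top
  have hker : LinearMap.ker φ ≠ ⊤ := fun h => hφ (LinearMap.ker_eq_top.1 h)
  refine ⟨fun U hU => hrank ▸ cliqueNum_paleyGraph_le hK hn5 hU, LinearMap.ker φ, hker, ?_⟩
  rw [← hrank]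
  exact le_antisymm (cliqueNum_paleyGraph_le hK hn5 hker) (le_cliqueNum_paleyGraph_ker hφ)
end

section
/- Let q be a prime power and n ≥ 2 an integer with q > 2 or n ≥ 6. Then the largest value of ω(G_U), as U ranges over all proper F_q-linear subspaces of F_{q^n}, equals q^{(n−1)/2} + 1 if n is odd and q^{n/2} if n is even; that is, every proper F_q-subspace U of F_{q^n} satisfies ω(G_U) ≤ q^{(n−1)/2} + 1 (n odd) resp. ω(G_U) ≤ q^{n/2} (n even), and this bound is attained by some proper F_q-subspace U. -/
open Module Submodule

section Bilinear

variable {K V M : Type*} [Field K] [AddCommGroup V] [Module K V] [AddCommGroup M] [Module K M]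
  (B : V →ₗ[K] V →ₗ[K] M) {S : Finset V}

theorem LinearMap.apply_sum_smul_eq_of_pairwise (hS : (S : Set V).Pairwise fun a b => B a b = 0)
    (g : V → K) {c : V} (hc : c ∈ S) : B (∑ d ∈ S, g d • d) c = g c • B c c := by
  simp_rw [B.map_sum₂, B.map_smul₂]
  refine Finset.sum_eq_single_of_mem c hc fun d hd hdc => ?_
  rw [hS hd hc hdc, smul_zero]

theorem LinearMap.disjoint_span_of_pairwise (hS : (S : Set V).Pairwise fun a b => B a b = 0)
    (hdiag : ∀ c ∈ S, B c c ≠ 0) {X : Submodule K V} (hX : ∀ x ∈ X, ∀ c ∈ S, B x c = 0) :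
    Disjoint X (span K (S : Set V)) := by
  rw [disjoint_def]
  intro x hxX hxS
  obtain ⟨g, -, rfl⟩ := mem_span_finset.mp hxS
  have hg : ∀ c ∈ S, g c = 0 := fun c hc => by
    have := B.apply_sum_smul_eq_of_pairwise hS g hc
    rw [hX _ hxX c hc, eq_comm, smul_eq_zero] at this
    exact this.resolve_right (hdiag c hc)
  exact Finset.sum_eq_zero fun c hc => by rw [hg c hc, zero_smul]

theorem LinearMap.finrank_sup_span_of_pairwise [FiniteDimensional K V]
    (hS : (S : Set V).Pairwise fun a b => B a b = 0) (hdiag : ∀ c ∈ S, B c c ≠ 0)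
    {X : Submodule K V} (hX : ∀ x ∈ X, ∀ c ∈ S, B x c = 0) :
    finrank K ↥(X ⊔ span K (S : Set V)) = finrank K X + S.card := by
  have hind : LinearIndependent K ((↑) : S → V) :=
    linearIndependent_of_isOrthoᵢ (B := B) (fun i j hij => hS i.2 j.2 (Subtype.coe_ne_coe.mpr hij))
      fun i => hdiag i i.2
  rw [← finrank_span_finset_eq_card hind, ← finrank_sup_add_finrank_inf_eq,
    (B.disjoint_span_of_pairwise hS hdiag hX).eq_bot, finrank_bot, add_zero]

end Bilinear

theorem Submodule.ncard_eq_card_pow_finrank {K V : Type*} [Field K] [Fintype K] [AddCommGroup V]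
    [Module K V] [FiniteDimensional K V] (W : Submodule K V) :
    (W : Set V).ncard = Fintype.card K ^ finrank K W := by
  rw [← Nat.card_coe_set_eq, ← Nat.card_eq_fintype_card]
  exact Module.natCard_eq_pow_finrank (K := K) (V := W)

section Field

variable {K F : Type*} [Field K] [Field F] [Algebra K F]

theorem Submodule.finrank_add_finrank_le_of_mul_le [FiniteDimensional K F] {U X Z : Submodule K F}
    (hU : U ≠ ⊤) (hXZ : X * Z ≤ U) : finrank K X + finrank K Z ≤ finrank K F := by
  obtain ⟨f, hf, hUf⟩ := U.exists_le_ker_of_lt_top hU.lt_top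
  let b : LinearMap.BilinForm K F := (LinearMap.mul K F).compr₂ f
  have hb : b.Nondegenerate := .ofSeparatingLeft fun x hx => by
    by_contra hx0
    exact hf (LinearMap.ext fun y => by simpa [b, hx0] using hx (x⁻¹ * y))
  have hX : X ≤ b.orthogonal Z := fun x hx =>
    LinearMap.BilinForm.mem_orthogonal_iff.mpr fun z hz => by
      simpa [b, mul_comm] using hUf (hXZ (mul_mem_mul hx hz))
  have := finrank_mono hX
  rw [LinearMap.BilinForm.finrank_orthogonal hb] at this
  have := Z.finrank_le
  omega

theorem isClique_paleyGraph_iff {S T : Set F} :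
    (paleyGraph S).IsClique T ↔ T.Pairwise fun a b => a * b ∈ S :=
  ⟨fun h _ ha _ hb hab => (h ha hb hab).2, fun h _ ha _ hb hab => ⟨hab, h ha hb hab⟩⟩

theorem exists_card_le_of_isClique_paleyGraph [Fintype K] [FiniteDimensional K F]
    {U : Submodule K F} (hU : U ≠ ⊤) {s : Finset F}
    (hs : (paleyGraph (U : Set F)).IsClique (s : Set F)) :
    ∃ t r : ℕ, 2 * t + r ≤ finrank K F ∧ s.card ≤ Fintype.card K ^ t + r := by
  classical
  rw [isClique_paleyGraph_iff] at hs
  set S₀ := s.filter fun c => c * c ∈ U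
  set S₁ := s.filter fun c => c * c ∉ U
  set X := span K (S₀ : Set F)
  have hXs : X * span K (s : Set F) ≤ U := by
    rw [span_mul_span, span_le]
    rintro _ ⟨a, ha, b, hb, rfl⟩
    obtain ⟨ha, haa⟩ := Finset.mem_filter.mp ha
    rcases eq_or_ne a b with rfl | hab
    exacts [haa, hs ha hb hab]
  let B := (LinearMap.mul K F).compr₂ U.mkQ
  have hB : ∀ x y, B x y = 0 ↔ x * y ∈ U := fun x y => Quotient.mk_eq_zero U
  have hrank : finrank K (span K (s : Set F)) = finrank K X + S₁.card := by
    rw [← Finset.filter_union_filter_not_eq (fun c => c * c ∈ U) s, Finset.coe_union, span_union]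
    refine B.finrank_sup_span_of_pairwise (fun a ha b hb hab => ?_) (fun c hc => ?_)
      fun x hx c hc => ?_
    · exact (hB a b).mpr (hs (Finset.filter_subset _ _ ha) (Finset.filter_subset _ _ hb) hab)
    · exact ((hB c c).not.mpr (Finset.mem_filter.mp hc).2)
    · exact (hB x c).mpr (hXs (mul_mem_mul hx (subset_span (Finset.filter_subset _ _ hc))))
  have hdim := finrank_add_finrank_le_of_mul_le hU hXs
  have hS₀ : S₀.card ≤ Fintype.card K ^ finrank K X := by
    have : Finite F := Module.finite_of_finite K
    rw [← Set.ncard_coe_finset, ← X.ncard_eq_card_pow_finrank]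
    exact Set.ncard_le_ncard subset_span
  refine ⟨finrank K X, S₁.card, by omega, ?_⟩
  have hcard : s.card = S₀.card + S₁.card := (Finset.card_filter_add_card_filter_not _).symm
  omega

end Field

theorem pow_add_two_mul_le_pow_add {q t d : ℕ} (hq : 2 ≤ q) (h : 3 ≤ q ∨ 3 ≤ t + d) :
    q ^ t + 2 * d ≤ q ^ (t + d) := by
  obtain ⟨p, rfl⟩ : ∃ p, q = p + 1 := ⟨q - 1, by omega⟩
  have hbern : 1 + d * p ≤ (p + 1) ^ d :=
    add_comm 1 p ▸ one_add_le_pow_of_two_add_nonneg (Nat.zero_le _) d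
  rw [pow_add]
  by_cases hp : 2 ≤ (p + 1) ^ t * p
  · calc (p + 1) ^ t + 2 * d ≤ (p + 1) ^ t + (p + 1) ^ t * p * d := by nlinarith
      _ = (p + 1) ^ t * (1 + d * p) := by ring
      _ ≤ (p + 1) ^ t * (p + 1) ^ d := Nat.mul_le_mul_left _ hbern
  obtain ⟨rfl, rfl⟩ : t = 0 ∧ p = 1 := by
    rcases Nat.eq_zero_or_pos t with rfl | ht
    · simp only [pow_zero, one_mul] at hp
      omega
    · nlinarith [Nat.le_self_pow ht.ne' (p + 1)]
  -- 2 ^ d = 8 * 2 ^ (d - 3) ≥ 8 * (d - 2) ≥ 2 * d + 1 for d ≥ 3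
  have h8 : 2 ^ d = 2 ^ 3 * 2 ^ (d - 3) := by rw [← pow_add]; congr 1; omega
  have := (d - 3).lt_two_pow_self
  norm_num at h ⊢
  omega

theorem pow_add_le_pow_div_two_add_mod {q n t r : ℕ} (hq : 2 ≤ q) (h : 2 < q ∨ 6 ≤ n)
    (htr : 2 * t + r ≤ n) : q ^ t + r ≤ q ^ (n / 2) + n % 2 := by
  have := pow_add_two_mul_le_pow_add (t := t) (d := n / 2 - t) hq (by omega)
  rw [Nat.add_sub_cancel' (by omega)] at this
  omega

theorem ite_odd_eq_pow_div_two_add_mod (q n : ℕ) :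
    (if Odd n then q ^ ((n - 1) / 2) + 1 else q ^ (n / 2)) = q ^ (n / 2) + n % 2 := by
  rcases Nat.even_or_odd n with hn | hn
  · rw [if_neg (Nat.not_odd_iff_even.mpr hn), Nat.even_iff.mp hn, add_zero]
  · have h1 := Nat.odd_iff.mp hn
    rw [if_pos hn, h1, show (n - 1) / 2 = n / 2 by omega]

section PowSpan

variable (K : Type*) {A : Type*} [CommSemiring K] [Semiring A] [Algebra K A]

def powSpan (α : A) (k : ℕ) : Submodule K A :=
  span K ((α ^ ·) '' Set.Iio k)

variable {K}

theorem pow_mem_powSpan (α : A) {i k : ℕ} (h : i < k) : α ^ i ∈ powSpan K α k :=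
  subset_span ⟨i, h, rfl⟩

theorem powSpan_mono (α : A) : Monotone (powSpan K α) := fun _ _ h =>
  span_mono (Set.image_mono (Set.Iio_subset_Iio h))

theorem powSpan_mul_powSpan_le (α : A) (a b : ℕ) :
    powSpan K α a * powSpan K α b ≤ powSpan K α (a + b - 1) := by
  rw [powSpan, powSpan, span_mul_span, span_le]
  rintro _ ⟨_, ⟨i, hi, rfl⟩, _, ⟨j, hj, rfl⟩, rfl⟩
  simp only [Set.mem_Iio, ← pow_add] at hi hj ⊢
  exact pow_mem_powSpan α (by omega)

end PowSpan

section LinearIndepPow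

variable {K F : Type*} [Field K] [Field F] [Algebra K F] {α : F} {n : ℕ}

theorem finrank_powSpan (hα : LinearIndepOn K (α ^ ·) (Set.Iio n)) {k : ℕ} (hk : k ≤ n) :
    finrank K (powSpan K α k) = k := by
  rw [powSpan, Set.image_eq_range, finrank_span_eq_card (hα.mono (Set.Iio_subset_Iio hk))]
  simp

theorem pow_notMem_powSpan (hα : LinearIndepOn K (α ^ ·) (Set.Iio n)) {k : ℕ} (hk : k < n) :
    α ^ k ∉ powSpan K α k :=
  ((linearIndepOn_insert Set.self_notMem_Iio).mp
    (hα.mono (Set.insert_subset hk (Set.Iio_subset_Iio hk.le)))).2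

variable (K F) in
theorem exists_linearIndepOn_pow [FiniteDimensional K F] [Algebra.IsSeparable K F] :
    ∃ α : F, LinearIndepOn K (α ^ ·) (Set.Iio (finrank K F)) := by
  let pb := Field.powerBasisOfFiniteOfSeparable K F
  refine ⟨pb.gen, pb.finrank ▸ ?_⟩
  have := pb.basis.linearIndependent
  rw [pb.coe_basis] at this
  simpa [Fin.range_val] using (linearIndepOn_univ_iff.mpr this).image_of_comp Fin.val (pb.gen ^ ·)

end LinearIndepPow

theorem exists_isNClique_paleyGraph {K F : Type*} [Field K] [Field F] [Algebra K F] [Fintype K]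
    [FiniteDimensional K F] :
    ∃ U : Submodule K F, U ≠ ⊤ ∧ ∃ s : Finset F, (paleyGraph (U : Set F)).IsNClique
      (Fintype.card K ^ (finrank K F / 2) + finrank K F % 2) s := by
  classical
  have : Fintype F := @Fintype.ofFinite F (Module.finite_of_finite K)
  obtain ⟨α, hα⟩ := exists_linearIndepOn_pow K F
  set n := finrank K F
  set m := n / 2
  have hn : 0 < n := finrank_pos
  set U := powSpan K α (n - 1)
  set W := powSpan K α m
  refine ⟨U, fun htop => pow_notMem_powSpan hα (by omega) (htop ▸ mem_top), ?_⟩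
  have hW : ((W : Set F).toFinset).card = Fintype.card K ^ m := by
    rw [← Set.ncard_eq_toFinset_card', W.ncard_eq_card_pow_finrank, finrank_powSpan hα (by omega)]
  -- `n - 1 = m + (m + n % 2) - 1`: one more power of `α` fits in when `n` is odd
  have hprod : ∀ a ∈ powSpan K α (m + n % 2), ∀ b ∈ W, a * b ∈ U := fun a ha b hb => by
    have := powSpan_mul_powSpan_le α (m + n % 2) m (mul_mem_mul ha hb)
    rwa [show m + n % 2 + m - 1 = n - 1 by omega] at this
  have hWW : (W : Set F).Pairwise fun a b => a * b ∈ U := fun a ha b hb _ =>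
    hprod a (powSpan_mono α (by omega) ha) b hb
  rcases Nat.mod_two_eq_zero_or_one n with h0 | h1
  · refine ⟨(W : Set F).toFinset, ?_, by rw [hW, h0, add_zero]⟩
    rwa [Set.coe_toFinset, isClique_paleyGraph_iff]
  · refine ⟨insert (α ^ m) (W : Set F).toFinset, ?_, ?_⟩
    · have hαm : α ^ m ∈ powSpan K α (m + n % 2) := pow_mem_powSpan α (by omega)
      rw [Finset.coe_insert, Set.coe_toFinset, isClique_paleyGraph_iff, Set.pairwise_insert]
      exact ⟨hWW, fun b hb _ => ⟨hprod _ hαm b hb, mul_comm b (α ^ m) ▸ hprod _ hαm b hb⟩⟩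
    · rw [Finset.card_insert_of_notMem, hW, h1]
      simpa using pow_notMem_powSpan hα (k := m) (by omega)

theorem omega_max_general_general (q n : ℕ)
    (h : 2 < q ∨ 6 ≤ n)
    (K F : Type*) [Field K] [Field F] [Algebra K F] [Fintype K] [Fintype F]
    (hK : Fintype.card K = q) (hF : Fintype.card F = q ^ n) :
    (∀ U : Submodule K F, U ≠ ⊤ →
      (paleyGraph (U : Set F)).cliqueNum ≤
        if Odd n then q ^ ((n - 1) / 2) + 1 else q ^ (n / 2)) ∧
    (∃ U : Submodule K F, U ≠ ⊤ ∧
      (paleyGraph (U : Set F)).cliqueNum =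
        if Odd n then q ^ ((n - 1) / 2) + 1 else q ^ (n / 2)) := by
  subst hK
  have hq : 2 ≤ Fintype.card K := Fintype.one_lt_card
  obtain rfl : finrank K F = n :=
    Nat.pow_right_injective hq (by simp only [← card_eq_pow_finrank, hF])
  rw [ite_odd_eq_pow_div_two_add_mod]
  have hupper (U : Submodule K F) (hU : U ≠ ⊤) : (paleyGraph (U : Set F)).cliqueNum ≤
      Fintype.card K ^ (finrank K F / 2) + finrank K F % 2 := by
    obtain ⟨s, hs⟩ := SimpleGraph.exists_isNClique_cliqueNum (G := paleyGraph (U : Set F))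
    obtain ⟨t, r, htr, hcard⟩ := exists_card_le_of_isClique_paleyGraph hU hs.isClique
    rw [← hs.card_eq]
    exact hcard.trans (pow_add_le_pow_div_two_add_mod hq h htr)
  obtain ⟨U, hU, s, hs⟩ := exists_isNClique_paleyGraph (K := K) (F := F)
  exact ⟨hupper, U, hU, (hupper U hU).antisymm (hs.card_eq ▸ hs.isClique.card_le_cliqueNum)⟩

/-- for `q > 2` or `n ≥ 6`, the largest value of `ω(G_U)` over all proper
`F_q`-subspaces `U` of `F_{q^n}` equals `q^((n-1)/2) + 1` if `n` is odd and `q^(n/2)`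
if `n` is even. -/
theorem omega_max_general (q n : ℕ) (hq : IsPrimePow q) (hn : 2 ≤ n)
    (h : 2 < q ∨ 6 ≤ n)
    (K F : Type*) [Field K] [Field F] [Algebra K F] [Fintype K] [Fintype F]
    (hK : Fintype.card K = q) (hF : Fintype.card F = q ^ n) :
    (∀ U : Submodule K F, U ≠ ⊤ →
      (paleyGraph (U : Set F)).cliqueNum ≤
        if Odd n then q ^ ((n - 1) / 2) + 1 else q ^ (n / 2)) ∧
    (∃ U : Submodule K F, U ≠ ⊤ ∧
      (paleyGraph (U : Set F)).cliqueNum =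
        if Odd n then q ^ ((n - 1) / 2) + 1 else q ^ (n / 2)) :=
  omega_max_general_general q n h K F hK hF
end

section
/- Let q be a prime power, n ≥ 2, and let U ⊊ F_{q^n} be an F_q-linear subspace of dimension d_U ≥ 1. If U contains no nonzero square of F_{q^n} (i.e., there is no b ∈ F_{q^n} with b ≠ 0 and b² ∈ U), then ω(G_U) ≤ d_U + 2. -/
open Finset

section

variable {K F : Type*} [Field K]

theorem linearIndependent_of_mul_self_notMem [CommRing F] [Algebra K F] {U : Submodule K F}
    {ι : Type*} {v : ι → F}
    (hsq : ∀ i, v i * v i ∉ U) (hmul : Pairwise fun i j => v i * v j ∈ U) :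
    LinearIndependent K v := by
  classical
  rw [linearIndependent_iff']
  intro s g hg i hi
  let f := U.mkQ ∘ₗ LinearMap.mulRight K (v i)
  have hfi : f (v i) ≠ 0 := by simpa [f, Submodule.Quotient.mk_eq_zero] using hsq i
  have hf : g i • f (v i) = 0 := by
    rw [← sum_eq_single_of_mem (f := fun j => g j • f (v j)) i hi fun j _ hji => ?_]
    · simpa only [map_sum, map_smul, map_zero] using congrArg f hg
    · simp [f, Submodule.Quotient.mk_eq_zero, hmul hji]
  exact (smul_eq_zero.mp hf).resolve_right hfi

theorem card_le_finrank_of_mul_mem [Field F] [Algebra K F] {U : Submodule K F}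
    [FiniteDimensional K U] {t : Finset F} {a : F} (ha : a ≠ 0) (haU : ∀ x ∈ t, a * x ∈ U)
    (hsq : ∀ x ∈ t, x * x ∉ U) (hmul : (t : Set F).Pairwise fun x y => x * y ∈ U) :
    #t ≤ Module.finrank K U := by
  have hli : LinearIndependent K fun x : t => (⟨a * x, haU x x.2⟩ : U) := by
    refine LinearIndependent.of_comp U.subtype ?_
    refine (linearIndependent_of_mul_self_notMem (U := U) (v := ((↑) : t → F))
      (fun x => hsq x x.2) fun x y hxy => hmul x.2 y.2 (Subtype.coe_ne_coe.mpr hxy)).map'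
      (LinearMap.mulLeft K a) ?_
    exact LinearMap.ker_eq_bot.mpr (mul_right_injective₀ ha)
  simpa using hli.fintype_card_le_finrank

end

theorem omega_le_of_no_nonzero_square_general
    (K F : Type*) [Field K] [Field F] [Algebra K F] [Fintype F]
    (U : Submodule K F)
    (hsq : ∀ b : F, b ≠ 0 → b ^ 2 ∉ U) :
    (paleyGraph (U : Set F)).cliqueNum ≤ Module.finrank K U + 2 := by
  classical
  obtain ⟨s, hs⟩ := (paleyGraph (U : Set F)).exists_isNClique_cliqueNum
  rw [← hs.card_eq]
  have hmul : (s : Set F).Pairwise fun x y => x * y ∈ U := fun x hx y hy hxy =>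
    (hs.isClique hx hy hxy).2
  by_cases h0 : s ⊆ {0}
  · have := card_le_card h0
    rw [card_singleton] at this
    omega
  obtain ⟨a, has, ha⟩ := not_subset.mp h0
  rw [mem_singleton] at ha
  have ht : (s.erase 0).erase a ⊆ s := (erase_subset _ _).trans (erase_subset _ _)
  have hcard : #((s.erase 0).erase a) ≤ Module.finrank K U := by
    refine card_le_finrank_of_mul_mem ha (fun x hx => hmul has (ht hx) ?_) (fun x hx => ?_)
      (hmul.mono ht)
    · exact (ne_of_mem_erase hx).symm
    · exact sq x ▸ hsq x (ne_of_mem_erase (mem_of_mem_erase hx))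
  have := pred_card_le_card_erase (s := s) (a := 0)
  have := pred_card_le_card_erase (s := s.erase 0) (a := a)
  omega

/-- if the proper `F_q`-subspace `U ⊊ F_{q^n}` of dimension `d_U ≥ 1` contains
no nonzero square of `F_{q^n}`, then `ω(G_U) ≤ d_U + 2`. -/
theorem omega_le_of_no_nonzero_square (q n : ℕ) (hq : IsPrimePow q) (hn : 2 ≤ n)
    (K F : Type*) [Field K] [Field F] [Algebra K F] [Fintype K] [Fintype F]
    (hK : Fintype.card K = q) (hF : Fintype.card F = q ^ n)
    (U : Submodule K F) (hU : U ≠ ⊤) (hd : 1 ≤ Module.finrank K U)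
    (hsq : ∀ b : F, b ≠ 0 → b ^ 2 ∉ U) :
    (paleyGraph (U : Set F)).cliqueNum ≤ Module.finrank K U + 2 :=
  omega_le_of_no_nonzero_square_general K F U hsq
end

section
/- Let q be a prime power, n ≥ 2, and let U ⊊ F_{q^n} be an F_q-linear subspace of dimension d_U ≥ 2. Then ω(G_U) ≤ q^{d_U}, with equality if and only if either (i) q = 2 and d_U = 2, or (ii) U = a²·F_{q^{d_U}} for some a ∈ F_{q^n}, a ≠ 0, where d_U < n divides n and F_{q^{d_U}} is the subfield of F_{q^n} with q^{d_U} elements. -/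
/-!
Put `N = q ^ d_U = #U`; since `d_U ≥ 2`, the elements of `U` sum to `0`. If `C` is a clique
avoiding `0` and `a ∈ C`, then `a • (C \ {a}) ⊆ U \ {0}`, so `#C ≤ N`, and `#C = N` would give
`a * (∑ C - a) = ∑ U = 0`, i.e. `a = ∑ C`, for every `a ∈ C`; hence `ω(G_U) ≤ N`.
A clique `t` of size `N` contains `0`, and for `b ∈ C = t \ {0}` the set `b • (C \ {b})` misses
exactly one element of `U \ {0}`, namely `b² - b ∑ C`. Comparing power sums of degrees 2 and 3
shows `∑ C = 0` once `N ≥ 8`, so all products of elements of `t` lie in `U` and `a • t = U` for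
`a ∈ C`. Then `a⁻² U` is closed under multiplication: it is the subfield `F_{q^{d_U}}`.
Conversely `a • F_{q^{d_U}}` is a clique when `U = a² F_{q^{d_U}}`, and for `q = d_U = 2` the set
`{0, a, u / a, v / a}` with `a² = u v / (u + v)` is a clique when `U = {0, u, v, u + v}`.
-/

open Finset Polynomial

theorem sum_eq_zero_of_two_le_finrank {K V : Type*} [Field K] [Fintype K] [AddCommGroup V]
    [Module K V] [Fintype V] (h : 2 ≤ Module.finrank K V) : ∑ v : V, v = 0 := by
  classical
  let e := (Module.finBasis K V).equivFun
  have hcoord : ∑ w : Fin (Module.finrank K V) → K, w = 0 := by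
    ext i
    have hq : 1 ≤ Fintype.card K - 1 := Nat.le_sub_of_add_le (Fintype.one_lt_card (α := K))
    simpa using MvPolynomial.sum_eval_eq_zero (MvPolynomial.X i : MvPolynomial _ K) (by
      simpa using one_lt_two.trans_le (by simpa using Nat.mul_le_mul hq h))
  calc ∑ v : V, v = ∑ w, e.symm w := (e.symm.toEquiv.sum_comp _).symm
    _ = 0 := by rw [← map_sum, hcoord, map_zero]

theorem ncard_setOf_pow_eq_self_le {F : Type*} [Field F] {m : ℕ} (hm : 1 < m) :
    {x : F | x ^ m = x}.ncard ≤ m := by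
  classical
  have hp := FiniteField.X_pow_card_sub_X_ne_zero F hm
  calc {x : F | x ^ m = x}.ncard = (X ^ m - X : F[X]).roots.toFinset.card := by
        rw [← Set.ncard_coe_finset]; congr; ext x; simp [mem_roots hp, sub_eq_zero]
    _ ≤ (X ^ m - X : F[X]).natDegree := card_le_degree_of_subset_roots (by simp)
    _ = m := FiniteField.X_pow_card_sub_X_natDegree_eq F hm

theorem Subfield.coe_eq_setOf_pow_card {F : Type*} [Field F] [Finite F] (E : Subfield F) :
    (E : Set F) = {x | x ^ Nat.card E = x} := by
  have : Fintype E := Fintype.ofFinite E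
  have hsub : (E : Set F) ⊆ {x | x ^ Nat.card E = x} := fun x hx => by
    simpa [Nat.card_eq_fintype_card] using
      congrArg Subtype.val (FiniteField.pow_card (⟨x, hx⟩ : E))
  refine Set.eq_of_subset_of_ncard_le hsub ?_ (Set.toFinite _)
  rw [← Nat.card_coe_set_eq]
  exact ncard_setOf_pow_eq_self_le Finite.one_lt_card

theorem Submodule.exists_intermediateField_of_mul_mem {K F : Type*} [Field K] [Field F]
    [Algebra K F] [Finite F] (U : Submodule K F) {c : F}
    (hc : c ≠ 0) (hcU : c ∈ U) (hmul : ∀ x ∈ U, ∀ y ∈ U, c⁻¹ * (x * y) ∈ U) :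
    ∃ E : IntermediateField K F,
      Module.finrank K E = Module.finrank K U ∧ (U : Set F) = (c * ·) '' E := by
  let f := LinearMap.mulLeft K c⁻¹
  have hf : Function.Injective f := mul_right_injective₀ (inv_ne_zero hc)
  let W := U.map f
  have hW : ∀ x, x ∈ W ↔ c * x ∈ U := fun x => by
    refine ⟨?_, fun hx => ⟨c * x, hx, by simp [f, hc]⟩⟩
    rintro ⟨u, hu, rfl⟩
    simpa [f, hc] using hu
  let A := W.toSubalgebra ((hW 1).2 (by simpa using hcU)) fun x y hx hy => (hW _).2 (by
    simpa [hc, mul_assoc, mul_left_comm] using hmul _ ((hW x).1 hx) _ ((hW y).1 hy))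
  refine ⟨A.toIntermediateField' (Finite.isField_of_domain A), ?_, ?_⟩
  · exact (Submodule.equivMapOfInjective f hf U).finrank_eq.symm
  · ext x
    refine ⟨fun hx => ⟨c⁻¹ * x, ⟨x, hx, rfl⟩, by simp [hc]⟩, ?_⟩
    rintro ⟨y, hy, rfl⟩
    exact (hW y).1 hy

section

variable {F : Type*} [Field F] [DecidableEq F] {C : Finset F} {a : F}

theorem Finset.card_image_mul_erase (ha : a ∈ C) (ha0 : a ≠ 0) :
    #((C.erase a).image (a * ·)) = #C - 1 := by
  rw [card_image_of_injective _ (mul_right_injective₀ ha0), card_erase_of_mem ha]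

theorem Finset.sum_pow_image_mul_erase (ha : a ∈ C) (ha0 : a ≠ 0) (k : ℕ) :
    ∑ x ∈ (C.erase a).image (a * ·), x ^ k = a ^ k * (∑ x ∈ C, x ^ k - a ^ k) := by
  simp_rw [sum_image fun x _ y _ h => mul_right_injective₀ ha0 h, mul_pow, ← mul_sum,
    sum_erase_eq_sub ha]

end

-- For `k = 2, 3` the identity says that a polynomial of degree `2k - 1` with leading coefficient
-- `-k s` vanishes on `C`; and `2 s = 3 s = 0` forces `s = 0`.
theorem eq_zero_of_forall_mem_pow_identity {F : Type*} [Field F] {C : Finset F} (hC : 5 < #C)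
    {s : F} (σ P : ℕ → F)
    (h : ∀ a ∈ C, ∀ k, P k = a ^ k * (σ k - a ^ k) + (a * a - a * s) ^ k) : s = 0 := by
  have h2 : 2 * s = 0 := by
    have hp : (Polynomial.C (σ 2 + s ^ 2) * X ^ 2 - Polynomial.C (2 * s) * X ^ 3
        - Polynomial.C (P 2) : F[X]) = 0 :=
      eq_zero_of_natDegree_lt_card_of_eval_eq_zero' _ C
        (fun a ha => by simp; linear_combination -h a ha 2)
        ((by compute_degree! : _ ≤ 3).trans_lt (by omega))
    have := congrArg (coeff · 3) hp
    simp only [coeff_sub, coeff_C_mul_X_pow, coeff_C, coeff_zero] at this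
    simpa using this
  have h3 : 3 * s = 0 := by
    have hp : (Polynomial.C (σ 3 - s ^ 3) * X ^ 3 + Polynomial.C (3 * s ^ 2) * X ^ 4
        - Polynomial.C (3 * s) * X ^ 5 - Polynomial.C (P 3) : F[X]) = 0 :=
      eq_zero_of_natDegree_lt_card_of_eval_eq_zero' _ C
        (fun a ha => by simp; linear_combination -h a ha 3)
        ((by compute_degree! : _ ≤ 5).trans_lt hC)
    have := congrArg (coeff · 5) hp
    simp only [coeff_sub, coeff_add, coeff_C_mul_X_pow, coeff_C, coeff_zero] at this
    simpa using this
  linear_combination h3 - h2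

theorem SimpleGraph.IsClique.ncard_le_cliqueNum {α : Type*} [Finite α] {G : SimpleGraph α}
    {s : Set α} (hs : G.IsClique s) : s.ncard ≤ G.cliqueNum := by
  have := Fintype.ofFinite s
  rw [Set.ncard_eq_toFinset_card']
  exact IsClique.card_le_cliqueNum (tc := by simpa using hs)

namespace paleyGraph

variable {F : Type*} [Field F]

@[simp]
theorem adj_iff {S : Set F} {a b : F} : (paleyGraph S).Adj a b ↔ a ≠ b ∧ a * b ∈ S := Iff.rfl

theorem isClique_image_mul_setOf_pow_eq_self (a : F) (m : ℕ) :
    (paleyGraph ((a ^ 2 * ·) '' {x : F | x ^ m = x})).IsClique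
      ((a * ·) '' {x | x ^ m = x}) := by
  rintro _ ⟨x, hx, rfl⟩ _ ⟨y, hy, rfl⟩ hne
  exact ⟨hne, x * y, by simp_all [mul_pow], by ring⟩

theorem ncard_le_cliqueNum_image_mul_sq [Finite F] {a : F} (ha : a ≠ 0) (m : ℕ) :
    ((a ^ 2 * ·) '' {x : F | x ^ m = x}).ncard ≤
      (paleyGraph ((a ^ 2 * ·) '' {x : F | x ^ m = x})).cliqueNum := by
  rw [Set.ncard_image_of_injective _ (mul_right_injective₀ (pow_ne_zero 2 ha)),
    ← Set.ncard_image_of_injective _ (mul_right_injective₀ ha)]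
  exact (isClique_image_mul_setOf_pow_eq_self a m).ncard_le_cliqueNum

theorem four_le_cliqueNum [Finite F] (h2 : (2 : F) = 0) {S : Set F} {u v : F} (hu0 : u ≠ 0)
    (hv0 : v ≠ 0) (huv : u ≠ v) (h0 : 0 ∈ S) (hu : u ∈ S) (hv : v ∈ S) (huvS : u + v ∈ S) :
    4 ≤ (paleyGraph S).cliqueNum := by
  classical
  have huv0 : u + v ≠ 0 := fun h => huv (by linear_combination h - v * h2)
  obtain ⟨a, ha⟩ := FiniteField.isSquare_of_char_two
    (CharP.ringChar_of_prime_eq_zero Nat.prime_two h2) (u * v / (u + v))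
  have ha0 : a ≠ 0 := by rintro rfl; simp_all
  have haa : a * a * (u + v) = u * v := by rw [← ha]; field_simp
  have hau : a ≠ u / a := fun h => hu0 <| mul_self_eq_zero.1 <| by
    rw [eq_div_iff ha0] at h; rw [h] at haa; linear_combination haa
  have hav : a ≠ v / a := fun h => hv0 <| mul_self_eq_zero.1 <| by
    rw [eq_div_iff ha0] at h; rw [h] at haa; linear_combination haa
  have huav : u / a ≠ v / a := fun h => huv (by rwa [div_left_inj' ha0] at h)
  have hprod : u / a * (v / a) = u + v := by
    field_simp; linear_combination -haa
  have hclique : (paleyGraph S).IsClique ({0, a, u / a, v / a} : Finset F) := by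
    simp [SimpleGraph.isClique_insert, forall_eq_or_imp, hau, hav, huav, mul_div_cancel₀, ha0,
      hprod, h0, hu, hv, huvS]
  calc 4 = #({0, a, u / a, v / a} : Finset F) := by
        rw [card_insert_of_notMem (by simp [ha0.symm, (div_ne_zero hu0 ha0).symm,
          (div_ne_zero hv0 ha0).symm]), card_insert_of_notMem (by simp [hau, hav]),
          card_pair huav]
    _ ≤ _ := hclique.card_le_cliqueNum

variable [DecidableEq F] {S C t : Finset F} {a : F}

theorem image_mul_erase_subset (hC : (paleyGraph (S : Set F)).IsClique (C : Set F))
    (hC0 : 0 ∉ C) (ha : a ∈ C) : (C.erase a).image (a * ·) ⊆ S.erase 0 := by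
  simp only [subset_iff, mem_image, mem_erase]
  rintro _ ⟨b, ⟨hba, hb⟩, rfl⟩
  exact ⟨mul_ne_zero (ne_of_mem_of_not_mem ha hC0) (ne_of_mem_of_not_mem hb hC0),
    (hC ha hb (Ne.symm hba)).2⟩

theorem card_lt_of_isClique_of_zero_notMem (hS0 : 0 ∈ S) (hsum : ∑ x ∈ S, x = 0)
    (hS : 1 < #S) (hC : (paleyGraph (S : Set F)).IsClique (C : Set F)) (hC0 : 0 ∉ C) :
    #C < #S := by
  rcases C.eq_empty_or_nonempty with rfl | ⟨a, ha⟩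
  · simpa using hS.pos
  have hle := card_le_card (image_mul_erase_subset hC hC0 ha)
  rw [card_image_mul_erase ha (ne_of_mem_of_not_mem ha hC0), card_erase_of_mem hS0] at hle
  refine lt_of_le_of_ne (by omega) fun hcard => ?_
  have hconst : ∀ b ∈ C, b = ∑ x ∈ C, x := fun b hb => by
    have hb0 := ne_of_mem_of_not_mem hb hC0
    have heq := eq_of_subset_of_card_le (image_mul_erase_subset hC hC0 hb) (by
      rw [card_image_mul_erase hb hb0, card_erase_of_mem hS0, hcard])
    have := sum_pow_image_mul_erase hb hb0 1
    rw [heq, sum_erase_eq_sub hS0] at this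
    simp only [pow_one, hsum, sub_zero] at this
    exact (sub_eq_zero.1 ((mul_eq_zero.1 this.symm).resolve_left hb0)).symm
  obtain ⟨b, hb, c, hc, hbc⟩ := one_lt_card.1 (hcard ▸ hS)
  exact hbc ((hconst b hb).trans (hconst c hc).symm)

theorem card_le_of_isClique (hS0 : 0 ∈ S) (hsum : ∑ x ∈ S, x = 0) (hS : 1 < #S)
    (ht : (paleyGraph (S : Set F)).IsClique (t : Set F)) : #t ≤ #S := by
  have := card_lt_of_isClique_of_zero_notMem hS0 hsum hS (ht.subset (by simp)) (t.notMem_erase 0)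
  have := pred_card_le_card_erase (s := t) (a := 0)
  omega

theorem zero_mem_of_isClique_of_card_eq (hS0 : 0 ∈ S) (hsum : ∑ x ∈ S, x = 0) (hS : 1 < #S)
    (ht : (paleyGraph (S : Set F)).IsClique (t : Set F)) (hcard : #t = #S) : 0 ∈ t := by
  by_contra h0
  exact (card_lt_of_isClique_of_zero_notMem hS0 hsum hS ht h0).ne hcard

theorem sdiff_image_mul_erase_eq (hS0 : 0 ∈ S) (hsum : ∑ x ∈ S, x = 0)
    (hC : (paleyGraph (S : Set F)).IsClique (C : Set F)) (hC0 : 0 ∉ C) (hcard : #C + 1 = #S)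
    (ha : a ∈ C) : S.erase 0 \ (C.erase a).image (a * ·) = {a * a - a * ∑ x ∈ C, x} := by
  have ha0 := ne_of_mem_of_not_mem ha hC0
  have hsub := image_mul_erase_subset hC hC0 ha
  obtain ⟨m, hm⟩ := card_eq_one.1 (show #(S.erase 0 \ (C.erase a).image (a * ·)) = 1 by
    rw [card_sdiff_of_subset hsub, card_image_mul_erase ha ha0, card_erase_of_mem hS0]
    have := card_pos.2 ⟨a, ha⟩
    omega)
  have hsplit := sum_sdiff (f := fun x => x) hsub
  rw [hm, sum_singleton, sum_erase_eq_sub hS0, hsum, sub_self,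
    show ∑ x ∈ (C.erase a).image (a * ·), x = a * ((∑ x ∈ C, x) - a) by
      simpa using sum_pow_image_mul_erase ha ha0 1] at hsplit
  rw [hm, show m = a * a - a * ∑ x ∈ C, x by linear_combination hsplit]

theorem sum_eq_zero_of_card_add_one_eq (hS0 : 0 ∈ S) (hsum : ∑ x ∈ S, x = 0)
    (hC : (paleyGraph (S : Set F)).IsClique (C : Set F)) (hC0 : 0 ∉ C) (hcard : #C + 1 = #S)
    (hS : 7 ≤ #S) : ∑ x ∈ C, x = 0 := by
  refine eq_zero_of_forall_mem_pow_identity (C := C) (by omega) (fun k => ∑ x ∈ C, x ^ k)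
    (fun k => ∑ x ∈ S.erase 0, x ^ k) fun a ha k => ?_
  have hsplit := sum_sdiff (f := (· ^ k)) (image_mul_erase_subset hC hC0 ha)
  rw [sdiff_image_mul_erase_eq hS0 hsum hC hC0 hcard ha, sum_singleton,
    sum_pow_image_mul_erase ha (ne_of_mem_of_not_mem ha hC0)] at hsplit
  linear_combination -hsplit

theorem mul_mem_of_isClique_of_card_eq (hS0 : 0 ∈ S) (hsum : ∑ x ∈ S, x = 0) (hS : 7 ≤ #S)
    (ht : (paleyGraph (S : Set F)).IsClique (t : Set F)) (hcard : #t = #S) :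
    ∀ x ∈ t, ∀ y ∈ t, x * y ∈ S := by
  have ht0 := zero_mem_of_isClique_of_card_eq hS0 hsum (by omega) ht hcard
  have hC : (paleyGraph (S : Set F)).IsClique (t.erase 0 : Set F) := ht.subset (by simp)
  have hCcard : #(t.erase 0) + 1 = #S := by
    rw [card_erase_of_mem ht0]; have := card_pos.2 ⟨0, ht0⟩; omega
  have hs := sum_eq_zero_of_card_add_one_eq hS0 hsum hC (t.notMem_erase 0) hCcard hS
  intro x hx y hy
  rcases eq_or_ne x y with rfl | hxy
  · rcases eq_or_ne x 0 with rfl | hx0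
    · simpa using hS0
    have := sdiff_image_mul_erase_eq hS0 hsum hC (t.notMem_erase 0) hCcard
      (mem_erase.2 ⟨hx0, hx⟩)
    rw [hs, mul_zero, sub_zero] at this
    exact mem_of_mem_erase (mem_sdiff.1 (this ▸ mem_singleton_self _)).1
  · exact (ht hx hy hxy).2

theorem exists_inv_mul_mem_of_isClique_of_card_eq (hS0 : 0 ∈ S) (hsum : ∑ x ∈ S, x = 0)
    (hS : 7 ≤ #S) (ht : (paleyGraph (S : Set F)).IsClique (t : Set F)) (hcard : #t = #S) :
    ∃ a : F, a ≠ 0 ∧ a ^ 2 ∈ S ∧ ∀ x ∈ S, ∀ y ∈ S, (a ^ 2)⁻¹ * (x * y) ∈ S := by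
  have hmul := mul_mem_of_isClique_of_card_eq hS0 hsum hS ht hcard
  obtain ⟨a, ha, ha0⟩ := exists_mem_ne (hcard ▸ (by omega : 1 < #S)) 0
  have himage : t.image (a * ·) = S :=
    eq_of_subset_of_card_le (image_subset_iff.2 fun x hx => hmul a ha x hx) (by
      rw [card_image_of_injective _ (mul_right_injective₀ ha0), hcard])
  refine ⟨a, ha0, by simpa [sq] using hmul a ha a ha, ?_⟩
  intro _ hx _ hy
  obtain ⟨x, hxt, rfl⟩ := mem_image.1 (himage ▸ hx)
  obtain ⟨y, hyt, rfl⟩ := mem_image.1 (himage ▸ hy)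
  convert hmul x hxt y hyt using 1
  field_simp

end paleyGraph

theorem eight_le_pow {q d : ℕ} (hq : 2 ≤ q) (hd : 2 ≤ d) (h : ¬(q = 2 ∧ d = 2)) : 8 ≤ q ^ d := by
  rcases (show 3 ≤ q ∨ 3 ≤ d by omega) with hq3 | hd3
  · calc 8 ≤ 3 ^ 2 := by norm_num
      _ ≤ q ^ d := (Nat.pow_le_pow_left hq3 2).trans (Nat.pow_le_pow_right (by omega) hd)
  · calc 8 = 2 ^ 3 := rfl
      _ ≤ q ^ d := (Nat.pow_le_pow_left hq 3).trans (Nat.pow_le_pow_right (by omega) hd3)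

namespace Submodule

variable {K F : Type*} [Field K] [Field F] [Algebra K F] [Fintype K] [Fintype F]
  (U : Submodule K F)

theorem exists_finset_coe_eq (hd : 2 ≤ Module.finrank K U) :
    ∃ S : Finset F, (S : Set F) = U ∧ #S = Fintype.card K ^ Module.finrank K U ∧
      ∑ x ∈ S, x = 0 := by
  classical
  refine ⟨(U : Set F).toFinset, Set.coe_toFinset _, ?_, ?_⟩
  · rw [Set.toFinset_card, ← Module.card_eq_pow_finrank]
    rfl
  · rw [show (U : Set F).toFinset = {x | x ∈ U}.toFinset from rfl, sum_toFinset_eq_subtype]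
    simpa using congrArg ((↑) : U → F) (sum_eq_zero_of_two_le_finrank hd)

theorem cliqueNum_paleyGraph_le (hd : 2 ≤ Module.finrank K U) :
    (paleyGraph (U : Set F)).cliqueNum ≤ Fintype.card K ^ Module.finrank K U := by
  classical
  obtain ⟨S, hSU, hcard, hsum⟩ := U.exists_finset_coe_eq hd
  obtain ⟨t, ht⟩ := (paleyGraph (U : Set F)).exists_isNClique_cliqueNum
  rw [← ht.card_eq, ← hcard]
  exact paleyGraph.card_le_of_isClique (by simp [← mem_coe, hSU]) hsum
    (hcard ▸ Nat.one_lt_pow (by omega) Fintype.one_lt_card) (hSU ▸ ht.isClique)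

theorem exists_eq_image_of_cliqueNum_paleyGraph_eq (hd : 2 ≤ Module.finrank K U)
    (h8 : 8 ≤ Fintype.card K ^ Module.finrank K U)
    (heq : (paleyGraph (U : Set F)).cliqueNum = Fintype.card K ^ Module.finrank K U) :
    Module.finrank K U ∣ Module.finrank K F ∧ ∃ a : F, a ≠ 0 ∧
      (U : Set F) = (a ^ 2 * ·) '' {x | x ^ Fintype.card K ^ Module.finrank K U = x} := by
  classical
  obtain ⟨S, hSU, hcard, hsum⟩ := U.exists_finset_coe_eq hd
  obtain ⟨t, ht⟩ := (paleyGraph (U : Set F)).exists_isNClique_cliqueNum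
  obtain ⟨a, ha0, haS, hmul⟩ := paleyGraph.exists_inv_mul_mem_of_isClique_of_card_eq
    (by simp [← mem_coe, hSU]) hsum (by omega) (hSU ▸ ht.isClique) (by rw [ht.card_eq, heq, hcard])
  simp only [← mem_coe, hSU, SetLike.mem_coe] at haS hmul
  obtain ⟨E, hE, hUE⟩ := U.exists_intermediateField_of_mul_mem (pow_ne_zero 2 ha0) haS hmul
  have hcardE : Nat.card E = Fintype.card K ^ Module.finrank K U := by
    rw [Module.natCard_eq_pow_finrank (K := K), hE, Nat.card_eq_fintype_card]
  refine ⟨hE ▸ Module.finrank_dvd_finrank_right K E F, a, ha0, ?_⟩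
  rw [hUE, ← hcardE]
  exact congrArg _ E.toSubfield.coe_eq_setOf_pow_card

theorem four_le_cliqueNum_paleyGraph (hK : Fintype.card K = 2) (hd : Module.finrank K U = 2) :
    4 ≤ (paleyGraph (U : Set F)).cliqueNum := by
  classical
  have h2K : (2 : K) = 0 := by exact_mod_cast hK ▸ FiniteField.cast_card_eq_zero K
  have h2 : (2 : F) = 0 := by rw [← map_ofNat (algebraMap K F), h2K, map_zero]
  obtain ⟨S, hSU, hcard, -⟩ := U.exists_finset_coe_eq hd.ge
  rw [hK, hd] at hcard
  obtain ⟨u, hu, hu0⟩ := exists_mem_ne (by omega : 1 < #S) 0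
  obtain ⟨v, hv, hv0u⟩ := exists_mem_notMem_of_card_lt_card
    ((card_le_two (a := 0) (b := u)).trans_lt (by omega : 2 < #S))
  simp only [mem_insert, mem_singleton, not_or] at hv0u
  simp only [← mem_coe, hSU, SetLike.mem_coe] at hu hv
  exact paleyGraph.four_le_cliqueNum h2 hu0 hv0u.1 (Ne.symm hv0u.2) U.zero_mem hu hv
    (U.add_mem hu hv)

end Submodule

theorem omega_le_q_pow_dim_general (q n : ℕ)
    (K F : Type*) [Field K] [Field F] [Algebra K F] [Fintype K] [Fintype F]
    (hK : Fintype.card K = q) (hF : Fintype.card F = q ^ n)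
    (U : Submodule K F) (hU : U ≠ ⊤) (hd : 2 ≤ Module.finrank K U) :
    (paleyGraph (U : Set F)).cliqueNum ≤ q ^ Module.finrank K U ∧
    ((paleyGraph (U : Set F)).cliqueNum = q ^ Module.finrank K U ↔
      (q = 2 ∧ Module.finrank K U = 2) ∨
      (Module.finrank K U ∣ n ∧ Module.finrank K U < n ∧
        ∃ a : F, a ≠ 0 ∧
          (U : Set F) =
            (fun x => a ^ 2 * x) '' {x : F | x ^ q ^ Module.finrank K U = x})) := by
  subst hK
  have hq : 2 ≤ Fintype.card K := Fintype.one_lt_card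
  have hle := U.cliqueNum_paleyGraph_le hd
  refine ⟨hle, fun heq => ?_, ?_⟩
  · by_cases hqd : Fintype.card K = 2 ∧ Module.finrank K U = 2
    · exact .inl hqd
    obtain ⟨hdvd, a, ha0, hUa⟩ :=
      U.exists_eq_image_of_cliqueNum_paleyGraph_eq hd (eight_le_pow hq hd hqd) heq
    have hn : Module.finrank K F = n := Nat.pow_right_injective hq <|
      show _ ^ _ = _ ^ n by rw [← hF, Module.card_eq_pow_finrank (K := K) (V := F)]
    exact .inr ⟨hn ▸ hdvd, hn ▸ Submodule.finrank_lt hU, a, ha0, hUa⟩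
  · rintro (⟨hK2, hd2⟩ | ⟨-, -, a, ha0, hUa⟩)
    · exact hle.antisymm (by rw [hK2, hd2]; exact U.four_le_cliqueNum_paleyGraph hK2 hd2)
    · refine hle.antisymm ?_
      obtain ⟨S, hSU, hcard, -⟩ := U.exists_finset_coe_eq hd
      calc Fintype.card K ^ Module.finrank K U = (U : Set F).ncard := by
            rw [← hSU, Set.ncard_coe_finset, hcard]
        _ ≤ _ := hUa ▸ paleyGraph.ncard_le_cliqueNum_image_mul_sq ha0 _

/-- for `d_U ≥ 2`, `ω(G_U) ≤ q^{d_U}`, with equality iff `q = 2 = d_U`, or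
`U = a² · F_{q^{d_U}}` for some `a ≠ 0`, where `d_U < n` divides `n` and the subfield
`F_{q^{d_U}}` is `{x | x^(q^{d_U}) = x}`. -/
theorem omega_le_q_pow_dim (q n : ℕ) (hq : IsPrimePow q) (hn : 2 ≤ n)
    (K F : Type*) [Field K] [Field F] [Algebra K F] [Fintype K] [Fintype F]
    (hK : Fintype.card K = q) (hF : Fintype.card F = q ^ n)
    (U : Submodule K F) (hU : U ≠ ⊤) (hd : 2 ≤ Module.finrank K U) :
    (paleyGraph (U : Set F)).cliqueNum ≤ q ^ Module.finrank K U ∧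
    ((paleyGraph (U : Set F)).cliqueNum = q ^ Module.finrank K U ↔
      (q = 2 ∧ Module.finrank K U = 2) ∨
      (Module.finrank K U ∣ n ∧ Module.finrank K U < n ∧
        ∃ a : F, a ≠ 0 ∧
          (U : Set F) =
            (fun x => a ^ 2 * x) '' {x : F | x ^ q ^ Module.finrank K U = x})) :=
  omega_le_q_pow_dim_general q n K F hK hF U hU hd
end

section
/- Let q be a prime power, n ≥ 2, let U ⊊ F_{q^n} be an F_q-linear subspace of dimension d_U ≥ 1, and let G be a maximal clique in G_U (a clique not properly contained in any other clique). Then the set V(G)₂ = {α ∈ V(G) : α² ∈ U} is an F_q-linear subspace of F_{q^n}: it contains 0 and is closed under addition and under multiplication by scalars from F_q. -/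
/-! A vertex `a` with `a² ∈ U` of a maximal clique `s` of `G_U` satisfies `x * a ∈ U` for every
`x ∈ s`, including `x = a`. This condition is linear in `a`, and by maximality any `y` with
`x * y ∈ U` for all `x ∈ s` already lies in `s`. Hence `a + b ∈ s`, and then
`(a + b)² = (a + b) a + (a + b) b ∈ U`. -/

lemma SimpleGraph.mem_of_maximal_isClique {V : Type*} {G : SimpleGraph V} {s : Set V} {y : V}
    (hs : Maximal G.IsClique s) (hy : ∀ x ∈ s, y ≠ x → G.Adj y x) : y ∈ s :=
  hs.2 (hs.1.insert hy) (Set.subset_insert y s) (Set.mem_insert y s)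

namespace paleyGraph

variable {F : Type*} [Field F] {S : Set F} {s : Set F}

lemma mem_of_maximal_isClique (hs : Maximal (paleyGraph S).IsClique s) {y : F}
    (hy : ∀ x ∈ s, x * y ∈ S) : y ∈ s :=
  SimpleGraph.mem_of_maximal_isClique hs fun x hx hyx => ⟨hyx, mul_comm y x ▸ hy x hx⟩

lemma mul_mem_of_sq_mem (hs : (paleyGraph S).IsClique s) {a x : F} (ha : a ∈ s)
    (ha2 : a ^ 2 ∈ S) (hx : x ∈ s) : x * a ∈ S := by
  obtain rfl | hxa := eq_or_ne x a
  · rwa [← sq]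
  · exact (hs hx ha hxa).2

variable (K : Type*) [CommSemiring K] [Algebra K F] {U : Submodule K F}

/-- The set `V(G)₂` of a maximal clique of `G_U`, as a subspace. -/
def squarePart (hs : Maximal (paleyGraph (U : Set F)).IsClique s) : Submodule K F where
  carrier := {α ∈ s | α ^ 2 ∈ U}
  zero_mem' :=
    ⟨mem_of_maximal_isClique hs fun x _ => by simp, by simp⟩
  add_mem' := by
    rintro a b ⟨ha, ha2⟩ ⟨hb, hb2⟩
    have hxa := fun x (hx : x ∈ s) => mul_mem_of_sq_mem hs.1 ha ha2 hx
    have hxb := fun x (hx : x ∈ s) => mul_mem_of_sq_mem hs.1 hb hb2 hx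
    have hab : a + b ∈ s := mem_of_maximal_isClique hs fun x hx => by
      rw [mul_add]
      exact U.add_mem (hxa x hx) (hxb x hx)
    refine ⟨hab, ?_⟩
    rw [sq, mul_add]
    exact U.add_mem (hxa _ hab) (hxb _ hab)
  smul_mem' := by
    rintro c a ⟨ha, ha2⟩
    refine ⟨mem_of_maximal_isClique hs fun x hx => ?_, ?_⟩
    · rw [mul_smul_comm]
      exact U.smul_mem c (mul_mem_of_sq_mem hs.1 ha ha2 hx)
    · rw [smul_pow]
      exact U.smul_mem _ ha2

end paleyGraph

theorem maximal_clique_square_part_subspace_general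
    (K F : Type*) [Field K] [Field F] [Algebra K F]
    (U : Submodule K F)
    (s : Set F) (hs : Maximal (paleyGraph (U : Set F)).IsClique s) :
    (0 : F) ∈ {α ∈ s | α ^ 2 ∈ U} ∧
    (∀ a ∈ {α ∈ s | α ^ 2 ∈ U}, ∀ b ∈ {α ∈ s | α ^ 2 ∈ U},
      a + b ∈ {α ∈ s | α ^ 2 ∈ U}) ∧
    (∀ c : K, ∀ a ∈ {α ∈ s | α ^ 2 ∈ U}, c • a ∈ {α ∈ s | α ^ 2 ∈ U}) :=
  let V := paleyGraph.squarePart K hs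
  ⟨V.zero_mem, fun _ ha _ hb => V.add_mem ha hb, fun c _ ha => V.smul_mem c ha⟩

/-- for a maximal clique `s` of `G_U`, the set
`V(G)₂ = {α ∈ s | α² ∈ U}` contains `0` and is closed under addition and under
multiplication by scalars from `F_q`, i.e. it is an `F_q`-subspace of `F_{q^n}`. -/
theorem maximal_clique_square_part_subspace (q n : ℕ) (hq : IsPrimePow q) (hn : 2 ≤ n)
    (K F : Type*) [Field K] [Field F] [Algebra K F] [Fintype K] [Fintype F]
    (hK : Fintype.card K = q) (hF : Fintype.card F = q ^ n)
    (U : Submodule K F) (hU : U ≠ ⊤) (hd : 1 ≤ Module.finrank K U)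
    (s : Set F) (hs : Maximal (paleyGraph (U : Set F)).IsClique s) :
    (0 : F) ∈ {α ∈ s | α ^ 2 ∈ U} ∧
    (∀ a ∈ {α ∈ s | α ^ 2 ∈ U}, ∀ b ∈ {α ∈ s | α ^ 2 ∈ U},
      a + b ∈ {α ∈ s | α ^ 2 ∈ U}) ∧
    (∀ c : K, ∀ a ∈ {α ∈ s | α ^ 2 ∈ U}, c • a ∈ {α ∈ s | α ^ 2 ∈ U}) :=
  maximal_clique_square_part_subspace_general K F U s hs
end

section
/- Let q be a prime power, n ≥ 2, let U ⊊ F_{q^n} be an F_q-linear subspace of dimension d_U ≥ 1, and let G be a maximal clique in G_U. Then the elements of V(G)₁ = {α ∈ V(G) : α² ∉ U} are F_q-linearly independent. -/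
namespace SimpleGraph.IsClique

theorem sq_mem_of_mem_span_diff {K F : Type*} [CommSemiring K] [Field F] [Algebra K F]
    {U : Submodule K F} {s : Set F} (hs : (paleyGraph (U : Set F)).IsClique s) {a : F}
    (ha : a ∈ s) (hspan : a ∈ Submodule.span K (s \ {a})) : a ^ 2 ∈ U := by
  have hprod : (· * a) '' (s \ {a}) ⊆ U := by
    rintro _ ⟨b, ⟨hb, hba⟩, rfl⟩
    exact (hs hb ha hba).2
  have hmap : a * a ∈ (Submodule.span K (s \ {a})).map (LinearMap.mulRight K a) :=
    Submodule.mem_map_of_mem hspan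
  rw [Submodule.map_span] at hmap
  rw [sq]
  exact Submodule.span_le.mpr hprod hmap

theorem linearIndepOn_nonsquare {K F : Type*} [Field K] [Field F] [Algebra K F]
    {U : Submodule K F} {s : Set F} (hs : (paleyGraph (U : Set F)).IsClique s) :
    LinearIndepOn K id {α ∈ s | α ^ 2 ∉ U} := by
  rw [linearIndepOn_iff_notMem_span]
  rintro a ⟨ha, hsq⟩ hspan
  rw [Set.image_id] at hspan
  exact hsq <| hs.sq_mem_of_mem_span_diff ha <|
    Submodule.span_mono (Set.sdiff_subset_sdiff_left (Set.sep_subset s _)) hspan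

end SimpleGraph.IsClique

theorem maximal_clique_nonsquare_part_linearIndependent_general
    (K F : Type*) [Field K] [Field F] [Algebra K F]
    (U : Submodule K F)
    (s : Set F) (hs : Maximal (paleyGraph (U : Set F)).IsClique s) :
    LinearIndependent K (fun x : ({α ∈ s | α ^ 2 ∉ U} : Set F) => (x : F)) :=
  hs.1.linearIndepOn_nonsquare

/-- for a maximal clique `s` of `G_U`, the elements of
`V(G)₁ = {α ∈ s | α² ∉ U}` are `F_q`-linearly independent. -/
theorem maximal_clique_nonsquare_part_linearIndependent (q n : ℕ)
    (hq : IsPrimePow q) (hn : 2 ≤ n)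
    (K F : Type*) [Field K] [Field F] [Algebra K F] [Fintype K] [Fintype F]
    (hK : Fintype.card K = q) (hF : Fintype.card F = q ^ n)
    (U : Submodule K F) (hU : U ≠ ⊤) (hd : 1 ≤ Module.finrank K U)
    (s : Set F) (hs : Maximal (paleyGraph (U : Set F)).IsClique s) :
    LinearIndependent K (fun x : ({α ∈ s | α ^ 2 ∉ U} : Set F) => (x : F)) :=
  maximal_clique_nonsquare_part_linearIndependent_general K F U s hs
end

section
/- Let q be a prime power, n ≥ 2, let U ⊊ F_{q^n} be an F_q-linear subspace of dimension d_U ≥ 1, and let G be a maximal clique in G_U. If V(G)₁ = {α ∈ V(G) : α² ∉ U} is nonempty and W is the F_q-linear span of V(G)₁, then W ∩ V(G)₂ = {0}, where V(G)₂ = {α ∈ V(G) : α² ∈ U}. -/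
theorem Submodule.eq_zero_of_mem_span_of_forall_map_eq_zero {K V W : Type*} [DivisionRing K]
    [AddCommGroup V] [Module K V] [AddCommGroup W] [Module K W] {T : Set V}
    (f : V → V →ₗ[K] W) (hf_self : ∀ β ∈ T, f β β ≠ 0)
    (hf_ne : ∀ a ∈ T, ∀ β ∈ T, a ≠ β → f β a = 0)
    {w : V} (hw : w ∈ span K T) (hfw : ∀ β ∈ T, f β w = 0) : w = 0 := by
  obtain ⟨c, hcT, rfl⟩ := mem_span_set.mp hw
  suffices hc : c = 0 by simp [hc]
  ext β
  by_contra hβ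
  have hβT : β ∈ T := hcT (Finsupp.mem_support_iff.mpr hβ)
  have hfβ : f β (c.sum fun a r => r • a) = c β • f β β := by
    rw [map_finsuppSum, Finsupp.sum, Finset.sum_eq_single β]
    · exact map_smul _ _ _
    · intro a ha haβ
      rw [map_smul, hf_ne a (hcT ha) β hβT haβ, smul_zero]
    · intro h
      exact absurd (Finsupp.mem_support_iff.mpr hβ) h
  rw [hfw β hβT, eq_comm, smul_eq_zero] at hfβ
  exact hfβ.elim hβ (hf_self β hβT)

theorem paleyGraph.zero_mem_of_maximal_isClique {F : Type*} [Field F] {S s : Set F}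
    (hS : (0 : F) ∈ S) (hs : Maximal (paleyGraph S).IsClique s) : (0 : F) ∈ s :=
  hs.mem_of_prop_insert <| hs.prop.insert fun _ _ h0b => ⟨h0b, by rwa [zero_mul]⟩

theorem maximal_clique_span_inter_general
    (K F : Type*) [Field K] [Field F] [Algebra K F]
    (U : Submodule K F)
    (s : Set F) (hs : Maximal (paleyGraph (U : Set F)).IsClique s) :
    (Submodule.span K ({α ∈ s | α ^ 2 ∉ U} : Set F) : Set F) ∩ {α ∈ s | α ^ 2 ∈ U}
      = {0} := by
  have hf (β x : F) : (U.mkQ ∘ₗ LinearMap.mulRight K β) x = 0 ↔ x * β ∈ U :=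
    Submodule.Quotient.mk_eq_zero U
  ext w
  constructor
  · rintro ⟨hw, hws, hw2⟩
    refine Submodule.eq_zero_of_mem_span_of_forall_map_eq_zero
      (fun β => U.mkQ ∘ₗ LinearMap.mulRight K β) ?_ ?_ hw ?_
    · rintro β ⟨-, hβ2⟩
      rwa [Ne, hf, ← sq]
    · rintro a ⟨has, -⟩ β ⟨hβs, -⟩ haβ
      exact (hf β a).mpr (hs.prop has hβs haβ).2
    · rintro β ⟨hβs, hβ2⟩
      exact (hf β w).mpr (hs.prop hws hβs fun h => hβ2 (h ▸ hw2)).2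
  · rintro rfl
    exact ⟨zero_mem _, paleyGraph.zero_mem_of_maximal_isClique U.zero_mem hs, by simp⟩

/-- for a maximal clique `s` of `G_U`, if `V(G)₁ = {α ∈ s | α² ∉ U}` is
nonempty and `W` is its `F_q`-linear span, then `W ∩ V(G)₂ = {0}`, where
`V(G)₂ = {α ∈ s | α² ∈ U}`. -/
theorem maximal_clique_span_inter (q n : ℕ) (hq : IsPrimePow q) (hn : 2 ≤ n)
    (K F : Type*) [Field K] [Field F] [Algebra K F] [Fintype K] [Fintype F]
    (hK : Fintype.card K = q) (hF : Fintype.card F = q ^ n)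
    (U : Submodule K F) (hU : U ≠ ⊤) (hd : 1 ≤ Module.finrank K U)
    (s : Set F) (hs : Maximal (paleyGraph (U : Set F)).IsClique s)
    (hne : ({α ∈ s | α ^ 2 ∉ U} : Set F).Nonempty) :
    (Submodule.span K ({α ∈ s | α ^ 2 ∉ U} : Set F) : Set F) ∩ {α ∈ s | α ^ 2 ∈ U}
      = {0} :=
  maximal_clique_span_inter_general K F U s hs
end

section
/- Let q be a prime power, n ≥ 2, and let U ⊊ F_{q^n} be an F_q-linear subspace of dimension d_U ≥ 1. Then ω(G_U) = q^t + r for some integers t, r ≥ 0 such that either t = 0 and r ≤ d_U + 1, or t ≥ 1 and r + t ≤ d_U. -/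
open Module Submodule

theorem LinearIndepOn.finrank_span_eq_ncard {K V : Type*} [DivisionRing K] [AddCommGroup V]
    [Module K V] [Module.Finite K V] {s : Set V} (hs : LinearIndepOn K id s) :
    finrank K (span K s) = s.ncard := by
  have : Finite s := LinearIndependent.finite hs
  have := Fintype.ofFinite s
  rw [finrank_span_set_eq_card hs, Set.ncard_eq_toFinset_card']

theorem SimpleGraph.cliqueNum_eq_ncard_of_subset {α : Type*} [Finite α] {G : SimpleGraph α}
    {C : Finset α} {T : Set α} (hC : G.IsNClique G.cliqueNum C) (hT : G.IsClique T)
    (hCT : (C : Set α) ⊆ T) : G.cliqueNum = T.ncard := by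
  classical
  have := Fintype.ofFinite α
  refine le_antisymm ?_ ?_
  · rw [← hC.card_eq, ← Set.ncard_coe_finset]
    exact Set.ncard_le_ncard hCT
  · rw [Set.ncard_eq_toFinset_card']
    exact SimpleGraph.IsClique.card_le_cliqueNum (tc := by simpa using hT)

section

variable {K F : Type*} [Field K] [Field F] [Algebra K F] {U : Submodule K F} {s : Set F}

namespace Submodule

def multipliers (U : Submodule K F) (s : Set F) : Submodule K F :=
  ⨅ c ∈ s, U.comap (LinearMap.mulRight K c)

theorem mem_multipliers {x : F} : x ∈ U.multipliers s ↔ ∀ c ∈ s, x * c ∈ U := by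
  simp [multipliers]

theorem mul_mem_of_mem_multipliers {x w : F} (hx : x ∈ U.multipliers s) (hw : w ∈ span K s) :
    x * w ∈ U :=
  (span_le (p := U.comap (LinearMap.mulLeft K x))).mpr (mem_multipliers.mp hx) hw

end Submodule

theorem mem_multipliers_sdiff_singleton (hs : (paleyGraph (U : Set F)).IsClique s) {a : F}
    (ha : a ∈ s) : a ∈ U.multipliers (s \ {a}) :=
  mem_multipliers.mpr fun _ hc => (hs ha hc.1 (Ne.symm hc.2)).2

theorem notMem_multipliers_sup_span_sdiff (hs : (paleyGraph (U : Set F)).IsClique s) {a : F}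
    (ha : a ∈ s) (haX : a ∉ U.multipliers s) :
    a ∉ U.multipliers s ⊔ span K (s \ {a}) := by
  intro h
  obtain ⟨x, hx, w, hw, hxw⟩ := mem_sup.mp h
  have hax : a * x ∈ U := mul_comm x a ▸ mem_multipliers.mp hx a ha
  have haw : a * w ∈ U := mul_mem_of_mem_multipliers (mem_multipliers_sdiff_singleton hs ha) hw
  refine haX (mem_multipliers.mpr fun c hc => ?_)
  rcases eq_or_ne c a with rfl | hca
  · rw [← hxw, mul_add, hxw]
    exact U.add_mem hax haw
  · exact (hs ha hc hca.symm).2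

theorem linearIndepOn_mkQ_multipliers (hs : (paleyGraph (U : Set F)).IsClique s) :
    LinearIndepOn K (U.multipliers s).mkQ (s \ U.multipliers s) := by
  rw [linearIndepOn_iff_notMem_span]
  rintro a ⟨ha, haX⟩ h
  refine notMem_multipliers_sup_span_sdiff hs ha haX ?_
  rw [← comap_map_mkQ, mem_comap, map_span]
  exact span_mono (Set.image_mono (Set.sdiff_subset_sdiff_left Set.sdiff_subset)) h

theorem finrank_le_of_mul_mem [FiniteDimensional K U] {z : F} (hz : z ≠ 0) {V : Submodule K F}
    (h : ∀ v ∈ V, z * v ∈ U) : finrank K V ≤ finrank K U :=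
  calc finrank K V = finrank K (V.map (LinearMap.mulLeft K z)) :=
        (V.equivMapOfInjective _ (mul_right_injective₀ hz)).finrank_eq
    _ ≤ finrank K U := finrank_mono (map_le_iff_le_comap.mpr h)

theorem ncard_sdiff_multipliers_le [FiniteDimensional K F]
    (hs : (paleyGraph (U : Set F)).IsClique s) :
    (s \ U.multipliers s).ncard ≤ finrank K U + 1 := by
  rcases (s \ U.multipliers s).eq_empty_or_nonempty with hA | ⟨a, haA⟩
  · simp [hA]
  have ha0 : a ≠ 0 := fun h => haA.2 (h ▸ zero_mem _)
  have hind : LinearIndepOn K id ((s \ U.multipliers s) \ {a}) :=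
    ((linearIndepOn_mkQ_multipliers hs).of_comp _).mono Set.sdiff_subset
  have hle := finrank_le_of_mul_mem (V := span K ((s \ U.multipliers s) \ {a})) ha0 fun _ hv =>
    mul_mem_of_mem_multipliers (mem_multipliers_sdiff_singleton hs haA.1)
      (span_mono (Set.sdiff_subset_sdiff_left Set.sdiff_subset) hv)
  rw [hind.finrank_span_eq_ncard, Set.ncard_sdiff_singleton_of_mem haA] at hle
  omega

theorem finrank_add_ncard_le [FiniteDimensional K F] (hs : (paleyGraph (U : Set F)).IsClique s)
    (hY : U.multipliers s ⊓ span K s ≠ ⊥) :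
    finrank K ↥(U.multipliers s ⊓ span K s) + (s \ U.multipliers s).ncard ≤ finrank K U := by
  set X := U.multipliers s
  set Y := X ⊓ span K s
  obtain ⟨y, hyY, hy0⟩ := Y.ne_bot_iff.mp hY
  have hind := linearIndepOn_mkQ_multipliers hs
  have hdisj : Disjoint (span K (s \ X)) X := by
    simpa only [Subtype.range_coe, ker_mkQ] using range_ker_disjoint hind
  have hYA : Y ⊓ span K (s \ X) = ⊥ := (hdisj.symm.mono_left inf_le_left).eq_bot
  calc finrank K Y + (s \ X).ncard
      = finrank K ↥(Y ⊔ span K (s \ X)) := by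
        rw [← (hind.of_comp _).finrank_span_eq_ncard, ← finrank_sup_add_finrank_inf_eq, hYA,
          finrank_bot, add_zero]
    _ ≤ finrank K (span K s) := finrank_mono (sup_le inf_le_right (span_mono Set.sdiff_subset))
    _ ≤ finrank K U := finrank_le_of_mul_mem hy0 fun _ => mul_mem_of_mem_multipliers hyY.1

theorem isClique_inf_span_union_sdiff (hs : (paleyGraph (U : Set F)).IsClique s) :
    (paleyGraph (U : Set F)).IsClique
      (↑(U.multipliers s ⊓ span K s) ∪ (s \ U.multipliers s)) := by
  rintro a (⟨haX, ha⟩ | ⟨ha, -⟩) b (⟨hbX, hb⟩ | ⟨hb, -⟩) hab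
  · exact ⟨hab, mul_mem_of_mem_multipliers haX hb⟩
  · exact ⟨hab, mem_multipliers.mp haX b hb⟩
  · exact ⟨hab, mul_comm b a ▸ mem_multipliers.mp hbX a ha⟩
  · exact hs ha hb hab

theorem cliqueNum_paleyGraph_eq [Finite F] {C : Finset F}
    (hC : (paleyGraph (U : Set F)).IsNClique (paleyGraph (U : Set F)).cliqueNum C) :
    (paleyGraph (U : Set F)).cliqueNum =
      Nat.card K ^ finrank K ↥(U.multipliers C ⊓ span K C) +
        ((C : Set F) \ U.multipliers C).ncard := by
  have hsub : (C : Set F) ⊆ ↑(U.multipliers C ⊓ span K C) ∪ (↑C \ U.multipliers C) := by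
    intro c hc
    by_cases hcX : c ∈ U.multipliers C
    · exact Or.inl ⟨hcX, subset_span hc⟩
    · exact Or.inr ⟨hc, hcX⟩
  have hdisj : Disjoint (↑(U.multipliers C ⊓ span K C) : Set F) (↑C \ U.multipliers C) :=
    Set.disjoint_left.mpr fun _ hY hA => hA.2 hY.1
  rw [SimpleGraph.cliqueNum_eq_ncard_of_subset hC (isClique_inf_span_union_sdiff hC.isClique) hsub,
    Set.ncard_union_eq hdisj, ← Nat.card_coe_set_eq, SetLike.coe_sort_coe,
    Module.natCard_eq_pow_finrank (K := K)]

end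

theorem omega_eq_q_pow_add_general (q : ℕ)
    (K F : Type*) [Field K] [Field F] [Algebra K F] [Fintype K] [Fintype F]
    (hK : Fintype.card K = q)
    (U : Submodule K F) :
    ∃ t r : ℕ, (paleyGraph (U : Set F)).cliqueNum = q ^ t + r ∧
      ((t = 0 ∧ r ≤ Module.finrank K U + 1) ∨
        (1 ≤ t ∧ r + t ≤ Module.finrank K U)) := by
  obtain ⟨C, hC⟩ := (paleyGraph (U : Set F)).exists_isNClique_cliqueNum
  have hs := hC.isClique
  refine ⟨_, _, by rw [cliqueNum_paleyGraph_eq hC, Nat.card_eq_fintype_card, hK], ?_⟩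
  rcases eq_or_ne (U.multipliers C ⊓ span K C) ⊥ with hY | hY
  · exact Or.inl ⟨by rw [hY, finrank_bot], ncard_sdiff_multipliers_le hs⟩
  · refine Or.inr ⟨Nat.one_le_iff_ne_zero.mpr (finrank_eq_zero.not.mpr hY), ?_⟩
    exact (add_comm _ _).trans_le (finrank_add_ncard_le hs hY)

/-- `ω(G_U) = q^t + r` for some `t, r ≥ 0` such that either `t = 0` and
`r ≤ d_U + 1`, or `t ≥ 1` and `r + t ≤ d_U`. -/
theorem omega_eq_q_pow_add (q n : ℕ) (hq : IsPrimePow q) (hn : 2 ≤ n)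
    (K F : Type*) [Field K] [Field F] [Algebra K F] [Fintype K] [Fintype F]
    (hK : Fintype.card K = q) (hF : Fintype.card F = q ^ n)
    (U : Submodule K F) (hU : U ≠ ⊤) (hd : 1 ≤ Module.finrank K U) :
    ∃ t r : ℕ, (paleyGraph (U : Set F)).cliqueNum = q ^ t + r ∧
      ((t = 0 ∧ r ≤ Module.finrank K U + 1) ∨
        (1 ≤ t ∧ r + t ≤ Module.finrank K U)) :=
  omega_eq_q_pow_add_general q K F hK U
end

section
/- Let q be a prime power, n ≥ 2, and let U ⊊ F_{q^n} be an F_q-linear subspace of dimension d_U ≥ 1. Then ω(G_U) ≥ 3. Moreover, if U contains no nonzero square of F_{q^n}, then ω(G_U) = 3. -/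
/-!
A proper nonzero subspace `U` forces `|F| ≥ 4`, so for `0 ≠ u ∈ U` some `c ≠ 0` has `c² ≠ u`,
and `{0, c, u / c}` is a triangle. Conversely, a `4`-clique contains three nonzero vertices
`x, y, z`, and `(x y)(x z) = x² (y z)`: since the product of two non-squares of a finite field
is a square, the three products `x y, x z, y z ∈ U` cannot all be non-squares.
-/

open Finset Polynomial SimpleGraph

theorem SimpleGraph.cliqueNum_lt_of_cliqueFree {α : Type*} {G : SimpleGraph α} {n : ℕ}
    (h : G.CliqueFree n) : G.cliqueNum < n := by
  by_contra! hle
  obtain ⟨s, hs⟩ := G.exists_isNClique_cliqueNum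
  exact h.mono hle s hs

theorem Submodule.three_lt_card_of_finrank_pos_of_ne_top {K V : Type*} [Field K] [AddCommGroup V]
    [Module K V] [Fintype K] [Fintype V] {U : Submodule K V} (hU : 0 < Module.finrank K U)
    (htop : U ≠ ⊤) : 3 < Fintype.card V := by
  have hV : 2 ≤ Module.finrank K V := (Submodule.finrank_lt htop).trans_le' hU
  calc 3 < 2 ^ 2 := by norm_num
    _ ≤ Fintype.card K ^ 2 := Nat.pow_le_pow_left Fintype.one_lt_card 2
    _ ≤ Fintype.card K ^ Module.finrank K V := Nat.pow_le_pow_right Fintype.card_pos hV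
    _ = Fintype.card V := (Module.card_eq_pow_finrank).symm

section Field

variable {F : Type*} [Field F]

theorem exists_ne_zero_sq_ne [Fintype F] (hF : 3 < Fintype.card F) (u : F) :
    ∃ c : F, c ≠ 0 ∧ c ^ 2 ≠ u := by
  classical
  by_contra! h
  have hsub : (univ : Finset F) ⊆ insert 0 (nthRootsFinset 2 u) := fun c _ => by
    by_cases hc : c = 0
    · simp [hc]
    · simp [mem_nthRootsFinset two_pos, h c hc]
  have hroots : #(nthRootsFinset 2 u) ≤ 2 := by
    rw [nthRootsFinset_def]
    exact (Multiset.toFinset_card_le _).trans (card_nthRoots 2 u)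
  have := (card_le_card hsub).trans (card_insert_le _ _)
  rw [card_univ] at this
  omega

theorem FiniteField.isSquare_mul_of_not_isSquare [Fintype F] {a b : F} (ha : ¬IsSquare a)
    (hb : ¬IsSquare b) : IsSquare (a * b) := by
  classical
  have ha0 : a ≠ 0 := by rintro rfl; exact ha IsSquare.zero
  have hb0 : b ≠ 0 := by rintro rfl; exact hb IsSquare.zero
  rw [← quadraticChar_one_iff_isSquare (mul_ne_zero ha0 hb0), map_mul,
    quadraticChar_neg_one_iff_not_isSquare.mpr ha, quadraticChar_neg_one_iff_not_isSquare.mpr hb]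
  norm_num

theorem paleyGraph_isNClique_three_of_mul_mem [DecidableEq F] {S : Set F} (h0 : (0 : F) ∈ S)
    {c b : F} (hc : c ≠ 0) (hb : b ≠ 0) (hcb : c ≠ b) (hS : c * b ∈ S) :
    (paleyGraph S).IsNClique 3 {0, c, b} :=
  is3Clique_triple_iff.mpr
    ⟨⟨hc.symm, by simpa using h0⟩, ⟨hb.symm, by simpa using h0⟩, ⟨hcb, hS⟩⟩

theorem three_le_cliqueNum_paleyGraph [Fintype F] (hF : 3 < Fintype.card F) {S : Set F}
    (h0 : (0 : F) ∈ S) {u : F} (hu : u ∈ S) (hu0 : u ≠ 0) : 3 ≤ (paleyGraph S).cliqueNum := by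
  classical
  obtain ⟨c, hc0, hcu⟩ := exists_ne_zero_sq_ne hF u
  have hcb : c * (u / c) = u := mul_div_cancel₀ u hc0
  have hne : c ≠ u / c := fun h => hcu (by rw [sq, ← hcb, ← h])
  have hclique :=
    paleyGraph_isNClique_three_of_mul_mem h0 hc0 (div_ne_zero hu0 hc0) hne (by rwa [hcb])
  exact hclique.card_eq ▸ hclique.isClique.card_le_cliqueNum

theorem not_isSquare_of_mem_of_ne_zero {S : Set F} (hS : ∀ b : F, b ≠ 0 → b ^ 2 ∉ S) {v : F}
    (hv : v ∈ S) (hv0 : v ≠ 0) : ¬IsSquare v := by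
  rintro ⟨r, rfl⟩
  exact hS r (by rintro rfl; simp at hv0) (by rwa [sq])

theorem paleyGraph_not_isNClique_three_of_ne_zero [Fintype F] [DecidableEq F] {S : Set F}
    (hS : ∀ b : F, b ≠ 0 → b ^ 2 ∉ S) {x y z : F} (hx : x ≠ 0) (hy : y ≠ 0) (hz : z ≠ 0) :
    ¬(paleyGraph S).IsNClique 3 {x, y, z} := by
  rw [is3Clique_triple_iff]
  rintro ⟨hxy, hxz, hyz⟩
  have hxy' := not_isSquare_of_mem_of_ne_zero hS hxy.2 (mul_ne_zero hx hy)
  have hxz' := not_isSquare_of_mem_of_ne_zero hS hxz.2 (mul_ne_zero hx hz)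
  have hsq : IsSquare (x * y * (x * z) * (x⁻¹ * x⁻¹)) :=
    (FiniteField.isSquare_mul_of_not_isSquare hxy' hxz').mul (IsSquare.mul_self x⁻¹)
  have hyz_eq : x * y * (x * z) * (x⁻¹ * x⁻¹) = y * z := by field_simp
  exact not_isSquare_of_mem_of_ne_zero hS hyz.2 (mul_ne_zero hy hz) (hyz_eq ▸ hsq)

theorem paleyGraph_cliqueFree_four [Fintype F] {S : Set F} (hS : ∀ b : F, b ≠ 0 → b ^ 2 ∉ S) :
    (paleyGraph S).CliqueFree 4 := by
  classical
  intro s hs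
  have h3 : 3 ≤ #(s.erase 0) := by
    simpa [hs.card_eq] using pred_card_le_card_erase (s := s) (a := 0)
  obtain ⟨t, hts, htc⟩ := exists_subset_card_eq h3
  obtain ⟨x, y, z, -, -, -, rfl⟩ := card_eq_three.mp htc
  have hne : ∀ w ∈ ({x, y, z} : Finset F), w ≠ 0 := fun w hw => ne_of_mem_erase (hts hw)
  exact paleyGraph_not_isNClique_three_of_ne_zero hS (hne x (by simp)) (hne y (by simp))
    (hne z (by simp)) ⟨hs.isClique.subset (fun w hw => mem_of_mem_erase (hts hw)), htc⟩

end Field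

theorem omega_ge_three_general
    (K F : Type*) [Field K] [Field F] [Algebra K F] [Fintype K] [Fintype F]
    (U : Submodule K F) (hU : U ≠ ⊤) (hd : 1 ≤ Module.finrank K U) :
    3 ≤ (paleyGraph (U : Set F)).cliqueNum ∧
    ((∀ b : F, b ≠ 0 → b ^ 2 ∉ U) → (paleyGraph (U : Set F)).cliqueNum = 3) := by
  obtain ⟨⟨u, huU⟩, hu0⟩ := Module.finrank_pos_iff_exists_ne_zero.mp hd
  have hlow := three_le_cliqueNum_paleyGraph
    (Submodule.three_lt_card_of_finrank_pos_of_ne_top hd hU) U.zero_mem huU (by simpa using hu0)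
  exact ⟨hlow, fun hS => le_antisymm
    (Nat.lt_succ_iff.mp (cliqueNum_lt_of_cliqueFree (paleyGraph_cliqueFree_four hS))) hlow⟩

/-- `ω(G_U) ≥ 3`; moreover, if `U` contains no nonzero square of `F_{q^n}`,
then `ω(G_U) = 3`. -/
theorem omega_ge_three (q n : ℕ) (hq : IsPrimePow q) (hn : 2 ≤ n)
    (K F : Type*) [Field K] [Field F] [Algebra K F] [Fintype K] [Fintype F]
    (hK : Fintype.card K = q) (hF : Fintype.card F = q ^ n)
    (U : Submodule K F) (hU : U ≠ ⊤) (hd : 1 ≤ Module.finrank K U) :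
    3 ≤ (paleyGraph (U : Set F)).cliqueNum ∧
    ((∀ b : F, b ≠ 0 → b ^ 2 ∉ U) → (paleyGraph (U : Set F)).cliqueNum = 3) :=
  omega_ge_three_general K F U hU hd
end

section
/- Let q be a prime power, n ≥ 2, and let U ⊊ F_{q^n} be an F_q-linear subspace of dimension d_U ≥ 1. If U contains a nonzero square of F_{q^n} (i.e., a² ∈ U for some a ≠ 0), then ω(G_U) ≥ q + min{1, d_U − 1}. -/
open Finset Module Submodule

section
variable {K F : Type*} [Field K] [Field F] [Algebra K F] {U : Submodule K F} {a b : F}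

theorem paleyGraph_isClique_range_smul (ha : a ^ 2 ∈ U) :
    (paleyGraph (U : Set F)).IsClique (Set.range fun c : K => c • a) := by
  rintro _ ⟨c, rfl⟩ _ ⟨c', rfl⟩ hne
  refine ⟨hne, ?_⟩
  rw [smul_mul_smul_comm, ← sq]
  exact U.smul_mem _ ha

theorem paleyGraph_isClique_insert_range_smul (ha : a ^ 2 ∈ U) (hb : a * b ∈ U) :
    (paleyGraph (U : Set F)).IsClique (insert b (Set.range fun c : K => c • a)) := by
  refine (paleyGraph_isClique_range_smul ha).insert ?_
  rintro _ ⟨c, rfl⟩ hne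
  refine ⟨hne, ?_⟩
  rw [mul_smul_comm, mul_comm]
  exact U.smul_mem _ hb

theorem exists_mul_mem_notMem_range_smul (ha : a ≠ 0) (hU : 1 < finrank K U) :
    ∃ b : F, a * b ∈ U ∧ b ∉ Set.range fun c : K => c • a := by
  obtain ⟨u, hu, hu_notMem⟩ : ∃ u ∈ U, u ∉ K ∙ a ^ 2 := by
    by_contra! hle
    have := (Submodule.finrank_mono hle).trans (finrank_span_le_card ({a ^ 2} : Set F))
    simp only [Set.toFinset_singleton, card_singleton] at this
    omega
  refine ⟨a⁻¹ * u, by rwa [mul_inv_cancel_left₀ ha], ?_⟩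
  rintro ⟨c, hc⟩
  apply hu_notMem
  rw [← mul_inv_cancel_left₀ ha u, ← hc, mul_smul_comm, ← sq]
  exact smul_mem _ _ (mem_span_singleton_self _)

end

theorem omega_lower_bound_of_nonzero_square_general (q : ℕ)
    (K F : Type*) [Field K] [Field F] [Algebra K F] [Fintype K] [Fintype F]
    (hK : Fintype.card K = q)
    (U : Submodule K F)
    (hsq : ∃ a : F, a ≠ 0 ∧ a ^ 2 ∈ U) :
    q + min 1 (Module.finrank K U - 1) ≤ (paleyGraph (U : Set F)).cliqueNum := by
  classical
  obtain ⟨a, ha, ha2⟩ := hsq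
  set s : Finset F := univ.image fun c : K => c • a
  have hs_coe : (s : Set F) = Set.range fun c : K => c • a := by simp [s]
  have hs_card : #s = q := by
    rw [card_image_of_injective _ (smul_left_injective K ha), card_univ, hK]
  rcases le_or_gt (finrank K U) 1 with hU | hU
  · rw [show min 1 (finrank K U - 1) = 0 by omega, add_zero, ← hs_card]
    exact (hs_coe ▸ paleyGraph_isClique_range_smul ha2).card_le_cliqueNum
  · obtain ⟨b, hb, hb_notMem⟩ := exists_mul_mem_notMem_range_smul ha hU
    have hbs : b ∉ s := fun h => hb_notMem (hs_coe ▸ h)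
    rw [show min 1 (finrank K U - 1) = 1 by omega, ← hs_card, ← card_insert_of_notMem hbs]
    refine SimpleGraph.IsClique.card_le_cliqueNum (tc := ?_)
    rw [coe_insert, hs_coe]
    exact paleyGraph_isClique_insert_range_smul ha2 hb

/-- if `U` contains a nonzero square of `F_{q^n}`, then
`ω(G_U) ≥ q + min {1, d_U - 1}`. -/
theorem omega_lower_bound_of_nonzero_square (q n : ℕ) (hq : IsPrimePow q) (hn : 2 ≤ n)
    (K F : Type*) [Field K] [Field F] [Algebra K F] [Fintype K] [Fintype F]
    (hK : Fintype.card K = q) (hF : Fintype.card F = q ^ n)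
    (U : Submodule K F) (hU : U ≠ ⊤) (hd : 1 ≤ Module.finrank K U)
    (hsq : ∃ a : F, a ≠ 0 ∧ a ^ 2 ∈ U) :
    q + min 1 (Module.finrank K U - 1) ≤ (paleyGraph (U : Set F)).cliqueNum :=
  omega_lower_bound_of_nonzero_square_general q K F hK U hsq
end

section
/- Let q be a prime power, n ≥ 2, and let U ⊊ F_{q^n} be an F_q-linear subspace of dimension d_U = 1. If q ∈ {2, 3}, then ω(G_U) = 3. If q > 3, then ω(G_U) = q if U contains a nonzero square of F_{q^n}, and ω(G_U) = 3 otherwise. -/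
open Finset

namespace SimpleGraph

variable {α : Type*} {G : SimpleGraph α}

lemma IsNClique.le_cliqueNum [Finite α] {n : ℕ} {s : Finset α} (hs : G.IsNClique n s) :
    n ≤ G.cliqueNum :=
  hs.card_eq ▸ IsClique.card_le_cliqueNum (tc := hs.isClique)

lemma cliqueNum_le_of_forall_card_le {m : ℕ}
    (h : ∀ t : Finset α, G.IsClique (t : Set α) → #t ≤ m) : G.cliqueNum ≤ m := by
  obtain ⟨s, hs⟩ := G.exists_isNClique_cliqueNum
  exact hs.card_eq ▸ h s hs.isClique

end SimpleGraph

namespace Submodule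

variable {K V : Type*} [Field K] [AddCommGroup V] [Module K V] {U : Submodule K V}

lemma exists_smul_eq_of_finrank_eq_one (hd : Module.finrank K U = 1) {x y : V} (hx : x ∈ U)
    (hy : y ∈ U) (hy0 : y ≠ 0) : ∃ c : K, c • y = x := by
  obtain ⟨c, hc⟩ := _root_.exists_smul_eq_of_finrank_eq_one hd
    (x := ⟨y, hy⟩) (by simpa using hy0) ⟨x, hx⟩
  exact ⟨c, congrArg Subtype.val hc⟩

end Submodule

section paleyGraph

variable {F : Type*} [Field F]

@[simp]
lemma paleyGraph_adj {S : Set F} {a b : F} : (paleyGraph S).Adj a b ↔ a ≠ b ∧ a * b ∈ S :=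
  Iff.rfl

lemma exists_ne_zero_mul_self_ne [Fintype F] (hF : 4 ≤ Fintype.card F) (u : F) :
    ∃ a : F, a ≠ 0 ∧ a * a ≠ u := by
  classical
  by_contra! h
  have hu : u = 1 := by simpa using (h 1 one_ne_zero).symm
  have hsub : (univ : Finset F) ⊆ {0, 1, -1} := fun a _ => by
    rcases eq_or_ne a 0 with rfl | ha
    · simp
    · have := mul_self_eq_one_iff.mp (hu ▸ h a ha)
      simp only [mem_insert, mem_singleton]
      tauto
  have := (card_le_card hsub).trans card_le_three
  rw [card_univ] at this
  omega

lemma exists_isNClique_three_paleyGraph [Fintype F] [DecidableEq F] (hF : 4 ≤ Fintype.card F)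
    {S : Set F} (h0 : 0 ∈ S) {u : F} (hu : u ∈ S) (hu0 : u ≠ 0) :
    ∃ s : Finset F, (paleyGraph S).IsNClique 3 s := by
  obtain ⟨a, ha0, hau⟩ := exists_ne_zero_mul_self_ne hF u
  have hua : u / a ≠ 0 := div_ne_zero hu0 ha0
  have ha_ne : a ≠ u / a := fun h => hau (by nth_rw 2 [h]; exact mul_div_cancel₀ u ha0)
  refine ⟨{0, a, u / a}, SimpleGraph.is3Clique_triple_iff.mpr ⟨?_, ?_, ?_⟩⟩
  · simpa [ha0.symm] using h0
  · simpa [hua.symm] using h0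
  · exact ⟨ha_ne, by rwa [mul_div_cancel₀ _ ha0]⟩

variable {K : Type*} [Field K] [Algebra K F] {U : Submodule K F}

lemma mul_div_mem_of_finrank_eq_one (hd : Module.finrank K U = 1) {x y z : F} (hx : x ∈ U)
    (hy : y ∈ U) (hz : z ∈ U) : x * y / z ∈ U := by
  rcases eq_or_ne z 0 with rfl | hz0
  · simp [U.zero_mem]
  obtain ⟨c, rfl⟩ := U.exists_smul_eq_of_finrank_eq_one hd hx hz hz0
  rw [smul_mul_assoc, smul_div_assoc, mul_div_cancel_left₀ _ hz0]
  exact U.smul_mem c hy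

lemma exists_sq_mem_of_isClique (hd : Module.finrank K U = 1) {t : Finset F}
    (ht : (paleyGraph (U : Set F)).IsClique (t : Set F)) (h3 : 3 < #t) :
    ∃ a ∈ t, a ≠ 0 ∧ a ^ 2 ∈ U := by
  classical
  have h2 : 2 < #(t.erase 0) := by
    have := pred_card_le_card_erase (s := t) (a := 0)
    omega
  obtain ⟨a, b, c, ha, hb, hc, hab, hac, hbc⟩ := two_lt_card_iff.mp h2
  simp only [mem_erase] at ha hb hc
  refine ⟨a, ha.2, ha.1, ?_⟩
  have hsq : a ^ 2 = a * b * (a * c) / (b * c) := by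
    field_simp [hb.1, hc.1]
  rw [hsq]
  exact mul_div_mem_of_finrank_eq_one hd (ht ha.2 hb.2 hab).2 (ht ha.2 hc.2 hac).2
    (ht hb.2 hc.2 hbc).2

variable [Fintype K] [DecidableEq F]

lemma isNClique_image_smul {a : F} (ha0 : a ≠ 0) (ha : a ^ 2 ∈ U) :
    (paleyGraph (U : Set F)).IsNClique (Fintype.card K) (univ.image fun c : K => c • a) := by
  refine ⟨fun x hx y hy hxy => ?_, ?_⟩
  · simp only [coe_image, coe_univ, Set.image_univ, Set.mem_range] at hx hy
    obtain ⟨c, rfl⟩ := hx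
    obtain ⟨c', rfl⟩ := hy
    refine ⟨hxy, ?_⟩
    rw [smul_mul_smul_comm, ← sq]
    exact U.smul_mem _ ha
  · rw [card_image_of_injective _ (smul_left_injective K ha0), card_univ]

lemma subset_image_smul_of_isClique (hd : Module.finrank K U = 1) {t : Finset F}
    (ht : (paleyGraph (U : Set F)).IsClique (t : Set F)) {a : F} (ha : a ∈ t) (ha0 : a ≠ 0)
    (ha2 : a ^ 2 ∈ U) : t ⊆ univ.image fun c : K => c • a := by
  intro x hx
  rw [mem_image]
  rcases eq_or_ne x a with rfl | hxa
  · exact ⟨1, mem_univ _, one_smul _ _⟩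
  obtain ⟨c, hc⟩ :=
    U.exists_smul_eq_of_finrank_eq_one hd (ht hx ha hxa).2 ha2 (pow_ne_zero 2 ha0)
  refine ⟨c, mem_univ _, mul_right_cancel₀ ha0 ?_⟩
  rw [smul_mul_assoc, ← sq, hc]

end paleyGraph

open Classical in
theorem cliqueNum_paleyGraph_of_finrank_eq_one {K F : Type*} [Field K] [Field F] [Algebra K F]
    [Fintype K] [Fintype F] (hF : 4 ≤ Fintype.card F) {U : Submodule K F}
    (hd : Module.finrank K U = 1) :
    (paleyGraph (U : Set F)).cliqueNum =
      if ∃ a : F, a ≠ 0 ∧ a ^ 2 ∈ U then max 3 (Fintype.card K) else 3 := by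
  have hU : U ≠ ⊥ := by
    rintro rfl
    simp at hd
  obtain ⟨u, hu, hu0⟩ := U.exists_mem_ne_zero_of_ne_bot hU
  obtain ⟨s, hs⟩ := exists_isNClique_three_paleyGraph hF U.zero_mem hu hu0
  apply le_antisymm
  · refine SimpleGraph.cliqueNum_le_of_forall_card_le fun t ht => ?_
    by_cases h3 : #t ≤ 3
    · split_ifs <;> omega
    · obtain ⟨a, ha, ha0, ha2⟩ := exists_sq_mem_of_isClique hd ht (not_le.mp h3)
      have hcard := (card_le_card (subset_image_smul_of_isClique hd ht ha ha0 ha2)).trans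
        (card_image_le.trans card_univ.le)
      rw [if_pos ⟨a, ha0, ha2⟩]
      exact le_max_of_le_right hcard
  · split_ifs with hsq
    · obtain ⟨a, ha0, ha2⟩ := hsq
      exact max_le hs.le_cliqueNum (isNClique_image_smul ha0 ha2).le_cliqueNum
    · exact hs.le_cliqueNum

theorem omega_dim_one_general (q n : ℕ) (hn : 2 ≤ n)
    (K F : Type*) [Field K] [Field F] [Algebra K F] [Fintype K] [Fintype F]
    (hK : Fintype.card K = q) (hF : Fintype.card F = q ^ n)
    (U : Submodule K F) (hd : Module.finrank K U = 1) :
    (q = 2 ∨ q = 3 → (paleyGraph (U : Set F)).cliqueNum = 3) ∧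
    (3 < q →
      ((∃ a : F, a ≠ 0 ∧ a ^ 2 ∈ U) → (paleyGraph (U : Set F)).cliqueNum = q) ∧
      (¬(∃ a : F, a ≠ 0 ∧ a ^ 2 ∈ U) → (paleyGraph (U : Set F)).cliqueNum = 3)) := by
  have hq : 2 ≤ q := hK ▸ Fintype.one_lt_card
  have hF4 : 4 ≤ Fintype.card F :=
    hF ▸ (Nat.pow_le_pow_left hq 2).trans (Nat.pow_le_pow_right (by omega) hn)
  rw [cliqueNum_paleyGraph_of_finrank_eq_one hF4 hd, hK]
  refine ⟨fun hq3 => ?_, fun hq3 => ⟨fun hsq => ?_, fun hsq => ?_⟩⟩ <;> split_ifs <;> omega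

/-- for `d_U = 1`: if `q ∈ {2, 3}` then `ω(G_U) = 3`; if `q > 3` then
`ω(G_U) = q` when `U` contains a nonzero square of `F_{q^n}`, and `ω(G_U) = 3`
otherwise. -/
theorem omega_dim_one (q n : ℕ) (hq : IsPrimePow q) (hn : 2 ≤ n)
    (K F : Type*) [Field K] [Field F] [Algebra K F] [Fintype K] [Fintype F]
    (hK : Fintype.card K = q) (hF : Fintype.card F = q ^ n)
    (U : Submodule K F) (hU : U ≠ ⊤) (hd : Module.finrank K U = 1) :
    (q = 2 ∨ q = 3 → (paleyGraph (U : Set F)).cliqueNum = 3) ∧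
    (3 < q →
      ((∃ a : F, a ≠ 0 ∧ a ^ 2 ∈ U) → (paleyGraph (U : Set F)).cliqueNum = q) ∧
      (¬(∃ a : F, a ≠ 0 ∧ a ^ 2 ∈ U) → (paleyGraph (U : Set F)).cliqueNum = 3)) :=
  omega_dim_one_general q n hn K F hK hF U hd
end

section
/- Let q be an even prime power (i.e., F_q has characteristic 2), n ≥ 2, and let B be a nondegenerate symmetric F_q-bilinear form on F_{q^n} (viewed as an n-dimensional F_q-vector space). Let t(B) be the largest dimension of an F_q-subspace W ⊆ F_{q^n} with B(u, w) = 0 for all u, w ∈ W. If q = 2 and t(B) ≤ 2, then every set E ⊆ F_{q^n} such that B(u, w) = 0 for all u, w ∈ E with u ≠ w satisfies |E| ≤ n + 1. -/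
/-!
Split a pairwise orthogonal set `E` into its isotropic part `E₀` and its anisotropic part `E₁`.
The span `W` of `E₀` is totally isotropic, so `d = dim W ≤ t ≤ 2` and `|E₀| ≤ 2 ^ d ≤ 2 d + 1`.
The vectors of `E₁` are linearly independent and their span meets its own orthogonal trivially,
so it meets `W` trivially. As `W` is orthogonal to `span E`, which contains `W ⊕ span E₁`,
nondegeneracy gives `d ≤ n - (d + |E₁|)`. Hence `|E| ≤ 2 d + 1 + |E₁| ≤ n + 1`.
-/

open Module Submodule Finset

namespace LinearMap.BilinForm

variable {K V : Type*} [Field K] [AddCommGroup V] [Module K V] (B : LinearMap.BilinForm K V)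

theorem finrank_add_finrank_orthogonal_of_separatingLeft [FiniteDimensional K V]
    (hB : B.SeparatingLeft) (W : Submodule K V) :
    finrank K W + finrank K (B.orthogonal W) = finrank K V := by
  rw [finrank_add_finrank_orthogonal', separatingLeft_iff_ker_eq_bot.1 hB, inf_bot_eq,
    finrank_bot, add_zero]

theorem span_le_orthogonal_span {S T : Set V} (h : ∀ s ∈ S, ∀ t ∈ T, B s t = 0) :
    span K T ≤ B.orthogonal (span K S) :=
  span_le.2 fun t ht _ hs => (span_le (p := ker (B.flip t))).2 (fun s hs' => h s hs' t ht) hs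

variable {B}

theorem span_inf_orthogonal_span_eq_bot_of_anisotropic {A : Finset V}
    (hA : ∀ u ∈ A, ∀ w ∈ A, u ≠ w → B u w = 0) (hA' : ∀ u ∈ A, B u u ≠ 0) :
    span K (A : Set V) ⊓ B.orthogonal (span K A) = ⊥ := by
  refine eq_bot_iff.2 fun x ⟨hx, hxA⟩ => ?_
  obtain ⟨f, -, rfl⟩ := mem_span_finset.1 hx
  have hcoeff : ∀ j ∈ A, f j = 0 := fun j hj => by
    have hBj : B j (∑ a ∈ A, f a • a) = f j * B j j := by
      simp only [map_sum, map_smul, smul_eq_mul]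
      exact sum_eq_single_of_mem j hj fun a ha haj => by rw [hA j hj a ha haj.symm, mul_zero]
    exact (mul_eq_zero.1 (hBj ▸ hxA j (subset_span hj))).resolve_right (hA' j hj)
  exact (mem_bot K).2 (sum_eq_zero fun j hj => by rw [hcoeff j hj, zero_smul])

theorem finrank_span_eq_card_of_anisotropic {A : Finset V}
    (hA : ∀ u ∈ A, ∀ w ∈ A, u ≠ w → B u w = 0) (hA' : ∀ u ∈ A, B u u ≠ 0) :
    finrank K (span K (A : Set V)) = #A :=
  finrank_span_finset_eq_card <| linearIndependent_of_iIsOrtho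
    (iIsOrtho_def.2 fun i j hij => hA i i.2 j j.2 (Subtype.coe_injective.ne hij)) fun i => hA' i i.2

variable [DecidableEq K] {E : Finset V}

theorem span_filter_isotropic_le_orthogonal_span (hE : ∀ u ∈ E, ∀ w ∈ E, u ≠ w → B u w = 0) :
    span K (E.filter (fun u => B u u = 0) : Set V) ≤ B.orthogonal (span K E) := by
  refine span_le_orthogonal_span B fun s hs t ht => ?_
  obtain ⟨htE, htt⟩ := mem_filter.1 ht
  by_cases hst : s = t
  · rwa [hst]
  · exact hE s hs t htE hst

theorem two_mul_finrank_span_isotropic_add_card_anisotropic_le [FiniteDimensional K V]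
    (hB : B.SeparatingLeft) (hE : ∀ u ∈ E, ∀ w ∈ E, u ≠ w → B u w = 0) :
    2 * finrank K (span K (E.filter (fun u => B u u = 0) : Set V)) +
      #(E.filter fun u => B u u ≠ 0) ≤ finrank K V := by
  set W := span K (E.filter (fun u => B u u = 0) : Set V)
  set E₁ := E.filter fun u => B u u ≠ 0
  set A := span K (E₁ : Set V)
  set U := span K (E : Set V)
  have hWU : W ≤ B.orthogonal U := span_filter_isotropic_le_orthogonal_span hE
  have hAU : A ≤ U := span_mono (filter_subset _ _)
  have hE₁ : ∀ u ∈ E₁, ∀ w ∈ E₁, u ≠ w → B u w = 0 := fun u hu w hw =>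
    hE u (mem_filter.1 hu).1 w (mem_filter.1 hw).1
  have hE₁' : ∀ u ∈ E₁, B u u ≠ 0 := fun u hu => (mem_filter.1 hu).2
  have hWA : W ⊓ A = ⊥ := eq_bot_iff.2 fun x hx =>
    span_inf_orthogonal_span_eq_bot_of_anisotropic hE₁ hE₁' ▸
      ⟨hx.2, orthogonal_le hAU (hWU hx.1)⟩
  have hWA_le : finrank K W + #E₁ ≤ finrank K U := by
    rw [← finrank_span_eq_card_of_anisotropic hE₁ hE₁', ← finrank_sup_add_finrank_inf_eq,
      hWA, finrank_bot, add_zero]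
    exact finrank_mono (sup_le (span_mono (filter_subset _ _)) hAU)
  have := finrank_add_finrank_orthogonal_of_separatingLeft B hB U
  have := finrank_mono hWU
  omega

end LinearMap.BilinForm

theorem Finset.card_le_card_pow_finrank_span (K : Type*) {V : Type*} [Field K] [Finite K]
    [AddCommGroup V] [Module K V] (S : Finset V) :
    #S ≤ Nat.card K ^ finrank K (span K (S : Set V)) := by
  rw [← natCard_eq_pow_finrank, ← Nat.card_eq_finsetCard]
  have : Finite (span K (S : Set V)) := Module.finite_of_finite K
  exact Nat.card_mono (Set.toFinite (span K (S : Set V) : Set V)) subset_span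

theorem pairwise_orthogonal_card_le_char_two_small_general (q n : ℕ)
    (K F : Type*) [Field K] [Field F] [Algebra K F] [Fintype K] [Fintype F]
    (hK : Fintype.card K = q) (hF : Fintype.card F = q ^ n)
    (B : F →ₗ[K] F →ₗ[K] K)
    (hnd : ∀ x : F, (∀ y : F, B x y = 0) → x = 0)
    (t : ℕ)
    (ht : IsGreatest {d : ℕ | ∃ W : Submodule K F, Module.finrank K W = d ∧
      ∀ u ∈ W, ∀ w ∈ W, B u w = 0} t)
    (hq2 : q = 2) (ht2 : t ≤ 2)
    (E : Finset F) (hE : ∀ u ∈ E, ∀ w ∈ E, u ≠ w → B u w = 0) :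
    E.card ≤ n + 1 := by
  classical
  subst hq2
  have hdim : finrank K F = n := by
    rw [card_eq_pow_finrank (K := K), hK] at hF
    exact Nat.pow_right_injective le_rfl hF
  have hrank := LinearMap.BilinForm.two_mul_finrank_span_isotropic_add_card_anisotropic_le hnd hE
  set E₀ := E.filter fun u => B u u = 0
  set W := span K (E₀ : Set F)
  have hWW : W ≤ LinearMap.BilinForm.orthogonal B W :=
    (LinearMap.BilinForm.span_filter_isotropic_le_orthogonal_span hE).trans
      (LinearMap.BilinForm.orthogonal_le (span_mono (filter_subset _ _)))
  have hW : finrank K W ≤ 2 := (ht.2 ⟨W, rfl, fun u hu w hw => hWW hw u hu⟩).trans ht2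
  have hE₀ : #E₀ ≤ 2 ^ finrank K W := by
    simpa only [Nat.card_eq_fintype_card, hK] using E₀.card_le_card_pow_finrank_span K
  have hsplit : #E₀ + #(E.filter fun u => B u u ≠ 0) = #E := E.card_filter_add_card_filter_not _
  have hpow : 2 ^ finrank K W ≤ 2 * finrank K W + 1 := by
    interval_cases finrank K W <;> norm_num
  omega

/-- let `q` be an even prime power, `B` a nondegenerate symmetric
`F_q`-bilinear form on `F_{q^n}`, and `t(B)` the largest dimension of a totally
`B`-isotropic `F_q`-subspace. If `q = 2` and `t(B) ≤ 2`, then every pairwise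
`B`-orthogonal set `E ⊆ F_{q^n}` satisfies `|E| ≤ n + 1`. -/
theorem pairwise_orthogonal_card_le_char_two_small (q n : ℕ)
    (hq : IsPrimePow q) (hqeven : Even q) (hn : 2 ≤ n)
    (K F : Type*) [Field K] [Field F] [Algebra K F] [Fintype K] [Fintype F]
    (hK : Fintype.card K = q) (hF : Fintype.card F = q ^ n)
    (B : F →ₗ[K] F →ₗ[K] K)
    (hsymm : ∀ x y : F, B x y = B y x)
    (hnd : ∀ x : F, (∀ y : F, B x y = 0) → x = 0)
    (t : ℕ)
    (ht : IsGreatest {d : ℕ | ∃ W : Submodule K F, Module.finrank K W = d ∧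
      ∀ u ∈ W, ∀ w ∈ W, B u w = 0} t)
    (hq2 : q = 2) (ht2 : t ≤ 2)
    (E : Finset F) (hE : ∀ u ∈ E, ∀ w ∈ E, u ≠ w → B u w = 0) :
    E.card ≤ n + 1 :=
  pairwise_orthogonal_card_le_char_two_small_general q n K F hK hF B hnd t ht hq2 ht2 E hE
end

section
/- Let q be an odd prime power, n ≥ 2 even, let λ ∈ F_{q^n} be a non-square with λ ≠ 0, and let U ⊊ F_{q^n} be an F_q-linear subspace of dimension n − 1. Then there exist a ∈ F_{q^n}, a ≠ 0, and ε ∈ {1, λ} such that U = a²ε·U_{q,n} = {a²εx : x ∈ F_{q^n}, Tr_n(x) = 0}, and the graphs G_U and G_{ε·U_{q,n}} are isomorphic. -/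
open Module

section Hyperplane

variable {K F : Type*} [Field K] [Field F] [Algebra K F] [FiniteDimensional K F]

theorem exists_ne_zero_forall_mul_mem {W U : Submodule K F}
    (h : finrank K W * finrank K (F ⧸ U) < finrank K F) :
    ∃ δ : F, δ ≠ 0 ∧ ∀ w ∈ W, δ * w ∈ U := by
  let L : F →ₗ[K] W →ₗ[K] F ⧸ U := ((LinearMap.mul K F).compl₂ W.subtype).compr₂ U.mkQ
  have hL : LinearMap.ker L ≠ ⊥ := fun hker => by
    have := LinearMap.finrank_le_finrank_of_injective (LinearMap.ker_eq_bot.mp hker)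
    rw [finrank_linearMap] at this
    omega
  obtain ⟨δ, hδL, hδ⟩ := (Submodule.ne_bot_iff _).mp hL
  refine ⟨δ, hδ, fun w hw => ?_⟩
  simpa [L, Submodule.Quotient.mk_eq_zero] using LinearMap.congr_fun hδL ⟨w, hw⟩

theorem exists_ne_zero_mul_image_eq_of_finrank_eq {W U : Submodule K F}
    (hW : finrank K W = finrank K F - 1) (hU : finrank K U = finrank K F - 1) :
    ∃ δ : F, δ ≠ 0 ∧ (U : Set F) = (δ * ·) '' W := by
  have hpos : 0 < finrank K F := finrank_pos
  have hQ : finrank K (F ⧸ U) = 1 := by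
    have := U.finrank_quotient_add_finrank
    omega
  obtain ⟨δ, hδ, hδW⟩ := exists_ne_zero_forall_mul_mem (W := W) (U := U) (by rw [hQ]; omega)
  have hmap : W.map (LinearMap.mulLeft K δ) = U := by
    refine Submodule.eq_of_le_of_finrank_le (Submodule.map_le_iff_le_comap.mpr hδW) ?_
    rw [← (Submodule.equivMapOfInjective _ (mul_right_injective₀ hδ) W).finrank_eq, hU, hW]
  exact ⟨δ, hδ, by rw [← hmap, Submodule.map_coe]; rfl⟩

end Hyperplane

theorem FiniteField.setOf_sum_pow_eq_zero_eq_ker_trace (K F : Type*) [Field K] [Field F]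
    [Finite F] [Algebra K F] :
    {x : F | ∑ i ∈ Finset.range (finrank K F), x ^ Nat.card K ^ i = 0} =
      LinearMap.ker (Algebra.trace K F) := by
  ext x
  simp [← FiniteField.algebraMap_trace_eq_sum_pow]

theorem Algebra.finrank_ker_trace (K F : Type*) [Field K] [Field F] [Algebra K F] [FiniteDimensional K F]
    [Algebra.IsSeparable K F] :
    finrank K (LinearMap.ker (Algebra.trace K F)) = finrank K F - 1 := by
  have h := LinearMap.finrank_range_add_finrank_ker (Algebra.trace K F)
  rw [LinearMap.range_eq_top.mpr (Algebra.trace_surjective K F), finrank_top,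
    finrank_self] at h
  omega

theorem FiniteField.exists_eq_sq_or_eq_sq_mul {F : Type*} [Field F] [Fintype F] {lam : F}
    (hlam : ¬IsSquare lam) {δ : F} (hδ : δ ≠ 0) :
    ∃ a : F, a ≠ 0 ∧ (δ = a ^ 2 ∨ δ = a ^ 2 * lam) := by
  classical
  have hlam0 : lam ≠ 0 := by rintro rfl; exact hlam .zero
  by_cases hsq : IsSquare δ
  · obtain ⟨a, rfl⟩ := hsq
    exact ⟨a, left_ne_zero_of_mul hδ, .inl (sq a).symm⟩
  · have : IsSquare (δ * lam) := by
      rw [← quadraticChar_one_iff_isSquare (mul_ne_zero hδ hlam0), map_mul,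
        quadraticChar_neg_one_iff_not_isSquare.mpr hsq,
        quadraticChar_neg_one_iff_not_isSquare.mpr hlam]
      norm_num
    obtain ⟨b, hb⟩ := this
    have hb0 : b ≠ 0 := by rintro rfl; exact mul_ne_zero hδ hlam0 (by simpa using hb)
    refine ⟨b * lam⁻¹, mul_ne_zero hb0 (inv_ne_zero hlam0), .inr ?_⟩
    field_simp
    rw [sq, ← hb]

def paleyGraphSqMulIso {F : Type*} [Field F] (S : Set F) {c : F} (hc : c ≠ 0) :
    paleyGraph S ≃g paleyGraph ((c ^ 2 * ·) '' S) where
  toEquiv := Equiv.mulLeft₀ c hc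
  map_rel_iff' {x y} := by
    show (c * x ≠ c * y ∧ c * x * (c * y) ∈ (c ^ 2 * ·) '' S) ↔ x ≠ y ∧ x * y ∈ S
    rw [(mul_right_injective₀ hc).ne_iff,
      show c * x * (c * y) = c ^ 2 * (x * y) by ring,
      (mul_right_injective₀ (pow_ne_zero 2 hc)).mem_set_image]

theorem hyperplane_classification_odd_q_even_n_general (q n : ℕ)
    (K F : Type*) [Field K] [Field F] [Algebra K F] [Fintype K] [Fintype F]
    (hK : Fintype.card K = q) (hF : Fintype.card F = q ^ n)
    (lam : F) (hlamns : ∀ b : F, b ^ 2 ≠ lam)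
    (U : Submodule K F) (hd : Module.finrank K U = n - 1) :
    ∃ a : F, a ≠ 0 ∧ ∃ ε ∈ ({1, lam} : Set F),
      (U : Set F) = (fun x => a ^ 2 * ε * x) ''
        {x : F | ∑ i ∈ Finset.range n, x ^ q ^ i = 0} ∧
      Nonempty ((paleyGraph (U : Set F)) ≃g
        (paleyGraph ((fun x => ε * x) ''
          {x : F | ∑ i ∈ Finset.range n, x ^ q ^ i = 0}))) := by
  have hn : finrank K F = n := by
    have h := card_eq_pow_finrank (K := K) (V := F)
    rw [hK, hF] at h
    exact (Nat.pow_right_injective (hK ▸ Fintype.one_lt_card) h).symm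
  subst hK hn
  rw [← Nat.card_eq_fintype_card, FiniteField.setOf_sum_pow_eq_zero_eq_ker_trace]
  obtain ⟨δ, hδ, hUδ⟩ := exists_ne_zero_mul_image_eq_of_finrank_eq (Algebra.finrank_ker_trace K F) hd
  have hlam : ¬IsSquare lam := fun ⟨r, hr⟩ => hlamns r (by rw [sq, hr])
  obtain ⟨a, ha, ε, hε, rfl⟩ : ∃ a : F, a ≠ 0 ∧ ∃ ε ∈ ({1, lam} : Set F), δ = a ^ 2 * ε := by
    obtain ⟨a, ha, hsq | hsq⟩ := FiniteField.exists_eq_sq_or_eq_sq_mul hlam hδ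
    exacts [⟨a, ha, 1, by simp, by rw [hsq, mul_one]⟩, ⟨a, ha, lam, by simp, hsq⟩]
  have hUε : (U : Set F) = (a ^ 2 * ·) '' ((ε * ·) '' LinearMap.ker (Algebra.trace K F)) := by
    simp only [hUδ, Set.image_image, mul_assoc]
  exact ⟨a, ha, ε, hε, hUδ, by rw [hUε]; exact ⟨(paleyGraphSqMulIso _ ha).symm⟩⟩

/-- if `q` is odd, `n` is even, `λ ∈ F_{q^n}` is a nonzero non-square, and
`U ⊊ F_{q^n}` is an `F_q`-subspace of dimension `n - 1`, then `U = a²ε · U_{q,n}` for some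
`a ≠ 0` and `ε ∈ {1, λ}`, where `U_{q,n} = {x | Tr_n(x) = 0}` with
`Tr_n(x) = ∑_{i<n} x^(q^i)`, and the graphs `G_U` and `G_{ε·U_{q,n}}` are isomorphic. -/
theorem hyperplane_classification_odd_q_even_n (q n : ℕ)
    (hq : IsPrimePow q) (hqodd : Odd q) (hn : 2 ≤ n) (hneven : Even n)
    (K F : Type*) [Field K] [Field F] [Algebra K F] [Fintype K] [Fintype F]
    (hK : Fintype.card K = q) (hF : Fintype.card F = q ^ n)
    (lam : F) (hlam : lam ≠ 0) (hlamns : ∀ b : F, b ^ 2 ≠ lam)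
    (U : Submodule K F) (hU : U ≠ ⊤) (hd : Module.finrank K U = n - 1) :
    ∃ a : F, a ≠ 0 ∧ ∃ ε ∈ ({1, lam} : Set F),
      (U : Set F) = (fun x => a ^ 2 * ε * x) ''
        {x : F | ∑ i ∈ Finset.range n, x ^ q ^ i = 0} ∧
      Nonempty ((paleyGraph (U : Set F)) ≃g
        (paleyGraph ((fun x => ε * x) ''
          {x : F | ∑ i ∈ Finset.range n, x ^ q ^ i = 0}))) :=
  hyperplane_classification_odd_q_even_n_general q n K F hK hF lam hlamns U hd
end

section
/- Let q be an odd prime power, n ≥ 2, and λ ∈ F_{q^n} with λ ≠ 0. Then there exists an invertible F_q-linear map T : F_{q^n} → F_{q^n} such that Tr_n(λxy) = Tr_n(T(x)·T(y)) for all x, y ∈ F_{q^n} if and only if λ is a square in F_{q^n}. -/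
/-!
Composing `Tr(λxy)` with an invertible `T` multiplies the Gram determinant of the trace form by
`det(T)²`, while the left hand side has Gram determinant `N(λ) · det G`, where `N(λ) = det(x ↦ λx)`
is the norm. So an equivalence forces `N(λ)` to be a square in `F_q`. Since
`N(λ) = λ^(1 + q + ⋯ + q^(n-1))`, Euler's criterion gives `N(λ)^((q-1)/2) = λ^((q^n-1)/2)`, so
`N(λ)` is a square in `F_q` exactly when `λ` is a square in `F_{q^n}`. Conversely, if `λ = b²`
then `T x = b x` works.
-/

open Finset

theorem Nat.pow_div_two_eq_geom_sum_mul_div_two {q : ℕ} (hq : Odd q) (d : ℕ) :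
    q ^ d / 2 = (∑ i ∈ range d, q ^ i) * (q / 2) := by
  have hgeom := geom_sum_mul_of_one_le hq.pos.nat_succ_le d
  have hqd : Odd (q ^ d) := hq.pow
  rw [Nat.odd_iff] at hq hqd
  have : q - 1 = 2 * (q / 2) := by omega
  rw [this, mul_left_comm] at hgeom
  omega

namespace FiniteField

variable {K L : Type*} [Field K] [Field L] [Fintype K] [Fintype L] [Algebra K L]

theorem isSquare_norm_iff (hK : ringChar K ≠ 2) {x : L} (hx : x ≠ 0) :
    IsSquare (Algebra.norm K x) ↔ IsSquare x := by
  have hL : ringChar L ≠ 2 := Algebra.ringChar_eq K L ▸ hK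
  have hodd : Odd (Fintype.card K) := Nat.odd_iff.mpr (odd_card_of_char_ne_two hK)
  have hnorm : algebraMap K L (Algebra.norm K x) =
      x ^ ∑ i ∈ range (Module.finrank K L), Fintype.card K ^ i := by
    rw [algebraMap_norm_eq_pow_sum, Nat.card_eq_fintype_card]
  rw [isSquare_iff hK (Algebra.norm_ne_zero_iff.mpr hx), isSquare_iff hL hx,
    Module.card_eq_pow_finrank (K := K) (V := L), Nat.pow_div_two_eq_geom_sum_mul_div_two hodd,
    pow_mul, ← hnorm, ← map_pow (algebraMap K L), map_eq_one_iff _ (algebraMap K L).injective]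

end FiniteField

theorem LinearMap.BilinForm.isSquare_det_of_comp_eq {K V : Type*} [Field K] [AddCommGroup V]
    [Module K V] [FiniteDimensional K V] {B : LinearMap.BilinForm K V} (hB : B.Nondegenerate)
    {f g : V →ₗ[K] V} (h : B.comp f LinearMap.id = B.comp g g) : IsSquare (LinearMap.det f) := by
  let b := Module.finBasis K V
  have hdet := congrArg (fun B => (LinearMap.BilinForm.toMatrix b B).det) h
  simp only [LinearMap.BilinForm.toMatrix_comp b b, LinearMap.toMatrix_id, Matrix.det_mul,
    Matrix.det_transpose, mul_one, LinearMap.det_toMatrix] at hdet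
  have hG := (LinearMap.BilinForm.nondegenerate_iff_det_ne_zero b).mp hB
  exact ⟨LinearMap.det g, mul_right_cancel₀ hG (by rw [hdet]; ring)⟩

theorem trace_form_equivalent_iff_square_general (q n : ℕ)
    (hqodd : Odd q)
    (K F : Type*) [Field K] [Field F] [Algebra K F] [Fintype K] [Fintype F]
    (hK : Fintype.card K = q) (hF : Fintype.card F = q ^ n)
    (lam : F) (hlam : lam ≠ 0) :
    (∃ T : F ≃ₗ[K] F, ∀ x y : F,
      ∑ i ∈ Finset.range n, (lam * x * y) ^ q ^ i =
        ∑ i ∈ Finset.range n, (T x * T y) ^ q ^ i) ↔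
    (∃ b : F, b ^ 2 = lam) := by
  have hdim : Module.finrank K F = n := by
    refine Nat.pow_right_injective (hK ▸ Fintype.one_lt_card) ?_
    simp only [← hK, ← Module.card_eq_pow_finrank, hF]
  have htrace (z : F) : ∑ i ∈ range n, z ^ q ^ i = algebraMap K F (Algebra.trace K F z) := by
    rw [FiniteField.algebraMap_trace_eq_sum_pow, hdim, Nat.card_eq_fintype_card, hK]
  have hchar : ringChar K ≠ 2 := fun h2 => by
    have := FiniteField.even_card_of_char_two h2
    have := Nat.odd_iff.mp hqodd
    omega
  simp only [htrace, (algebraMap K F).injective.eq_iff, sq, eq_comm (b := lam)]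
  constructor
  · rintro ⟨T, hT⟩
    have hform : (Algebra.traceForm K F).comp (Algebra.lmul K F lam) LinearMap.id =
        (Algebra.traceForm K F).comp T T := by
      ext x y
      simpa [mul_assoc] using hT x y
    have hnorm := LinearMap.BilinForm.isSquare_det_of_comp_eq (traceForm_nondegenerate K F) hform
    rwa [← Algebra.norm_apply, FiniteField.isSquare_norm_iff hchar hlam] at hnorm
  · rintro ⟨b, rfl⟩
    have hb : b ≠ 0 := by rintro rfl; simp at hlam
    refine ⟨(LinearEquiv.smulOfNeZero F F b hb).restrictScalars K, fun x y => ?_⟩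
    simp only [LinearEquiv.restrictScalars_apply, LinearEquiv.smulOfNeZero_apply, smul_eq_mul]
    congr 1
    ring

/-- for `q` odd and `λ ∈ F_{q^n}` nonzero, there exists an invertible
`F_q`-linear map `T : F_{q^n} → F_{q^n}` with `Tr_n(λxy) = Tr_n(T(x)·T(y))` for all
`x, y` (where `Tr_n(a) = ∑_{i<n} a^(q^i)`) if and only if `λ` is a square in
`F_{q^n}`. -/
theorem trace_form_equivalent_iff_square (q n : ℕ)
    (hq : IsPrimePow q) (hqodd : Odd q) (hn : 2 ≤ n)
    (K F : Type*) [Field K] [Field F] [Algebra K F] [Fintype K] [Fintype F]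
    (hK : Fintype.card K = q) (hF : Fintype.card F = q ^ n)
    (lam : F) (hlam : lam ≠ 0) :
    (∃ T : F ≃ₗ[K] F, ∀ x y : F,
      ∑ i ∈ Finset.range n, (lam * x * y) ^ q ^ i =
        ∑ i ∈ Finset.range n, (T x * T y) ^ q ^ i) ↔
    (∃ b : F, b ^ 2 = lam) :=
  trace_form_equivalent_iff_square_general q n hqodd K F hK hF lam hlam
end
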